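/- arXiv:2406.09319 — 8 statements merged into one kernel-verified Lean document; each statement's English description precedes it below -/
import Mathlib

section
/- Let 𝒜 = {[a_m,b_m] : m ∈ ℕ} be a standard sequence. Then ⋃𝒜, with the subspace topology inherited from 𝕄, is homeomorphic to 𝕄, and 𝕄*_𝒜 := cl_{β𝕄}(⋃𝒜) ∖ 𝕄 is homeomorphic to 𝕄*. -/
open Set Topology Filter

noncomputable section

/-- The unit interval `[0,1] ⊆ ℝ`. -/
abbrev UnitI : Type := Set.Icc (0:ℝ) 1

/-- The space `𝕄 = ℕ × [0,1]`. -/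
abbrev Mspace : Type := ℕ × UnitI

/-- `β𝕄`, the Stone–Čech compactification of `𝕄`. -/
abbrev betaM : Type := StoneCech Mspace

/-- The copy of `𝕄` inside `β𝕄`. -/
def Mcopy : Set betaM := Set.range (stoneCechUnit : Mspace → betaM)

/-- `𝕄* = β𝕄 ∖ 𝕄`. -/
def MstarS : Set betaM := Mcopyᶜ

/-- `A* = cl_{β𝕄}(A) ∖ 𝕄` for `A ⊆ 𝕄`. -/
def mstar (A : Set Mspace) : Set betaM := closure (stoneCechUnit '' A) \ Mcopy

/-- The interval `{n} × [s,t]` inside `𝕄`. -/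
def colIcc (n : ℕ) (s t : ℝ) : Set Mspace :=
  {p : Mspace | p.1 = n ∧ s ≤ (p.2 : ℝ) ∧ (p.2 : ℝ) ≤ t}

/-- The data `(col, lo, hi)` describes a standard sequence: the intervals
`{col m} × [lo m, hi m]` are nondegenerate closed subintervals of single columns of `𝕄`,
pairwise disjoint, forming a locally finite family in `𝕄`. -/
def IsStdSeqData (col : ℕ → ℕ) (lo hi : ℕ → ℝ) : Prop :=
  (∀ m, 0 ≤ lo m ∧ lo m < hi m ∧ hi m ≤ 1) ∧
  (Pairwise fun m k => Disjoint (colIcc (col m) (lo m) (hi m)) (colIcc (col k) (lo k) (hi k))) ∧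
  LocallyFinite (fun m => colIcc (col m) (lo m) (hi m))

/-- A standard sequence `{[a_m,b_m] : m ∈ ℕ}`. -/
structure StdSeq where
  col : ℕ → ℕ
  lo : ℕ → ℝ
  hi : ℕ → ℝ
  std : IsStdSeqData col lo hi

/-- The `m`-th interval `[a_m,b_m]` of a standard sequence. -/
def StdSeq.interval (A : StdSeq) (m : ℕ) : Set Mspace := colIcc (A.col m) (A.lo m) (A.hi m)

/-- `⋃𝒜`. -/
def StdSeq.union (A : StdSeq) : Set Mspace := ⋃ m, A.interval m

/-- `𝕄*_𝒜 = cl_{β𝕄}(⋃𝒜) ∖ 𝕄`. -/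
def StdSeq.mstarOf (A : StdSeq) : Set betaM := mstar A.union

/-! The map `(m, x) ↦ (col m, lo m + x (hi m - lo m))` is a continuous injection `𝕄 → 𝕄` onto
`⋃𝒜`; it is closed because every column of `𝕄` is compact and the intervals form a locally
finite family, so it is a closed embedding and `𝕄 ≅ ⋃𝒜`.

For a closed embedding `f : X → Y` into a normal space, Tietze extension makes
`βf : βX → βY` injective, so `βf` embeds the compact space `βX` onto `cl_{βY}(f X)`.
Complete regularity of `Y` shows that a point of `Y` lies in `cl_{βY}(f X)` only if it lies in
`f X`, so `βf` carries the remainder `βX ∖ X` onto `cl_{βY}(f X) ∖ Y`. -/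

open Function

section LocallyFiniteColumns

variable {ι X Y : Type*} [TopologicalSpace ι] [TopologicalSpace X]
  [CompactSpace X] [TopologicalSpace Y] [T2Space Y] {f : ι × X → Y}

theorem isClosedMap_of_locallyFinite_columns (hf : ∀ i, Continuous fun x => f (i, x))
    (hfin : LocallyFinite fun i => range fun x => f (i, x)) : IsClosedMap f := by
  intro F hF
  have hunion : f '' F = ⋃ i, (fun x => f (i, x)) '' {x | (i, x) ∈ F} := by
    ext y
    simp only [mem_image, mem_iUnion, mem_ofPred_eq, Prod.exists]
  rw [hunion]
  refine (hfin.subset fun i => image_subset_range _ _).isClosed_iUnion fun i => ?_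
  exact ((hF.preimage (Continuous.prodMk_right i)).isCompact.image (hf i)).isClosed

theorem isClosedEmbedding_of_locallyFinite_columns [DiscreteTopology ι]
    (hf : ∀ i, Continuous fun x => f (i, x))
    (hfin : LocallyFinite fun i => range fun x => f (i, x)) (hinj : Injective f) :
    IsClosedEmbedding f :=
  .of_continuous_injective_isClosedMap (continuous_prod_of_discrete_left.2 hf) hinj
    (isClosedMap_of_locallyFinite_columns hf hfin)

end LocallyFiniteColumns

section StoneCech

variable {X Y : Type*} [TopologicalSpace X] [TopologicalSpace Y]

theorem stoneCechUnit_mem_closure_image_iff [CompletelyRegularSpace Y] {C : Set Y}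
    (hC : IsClosed C) {y : Y} : stoneCechUnit y ∈ closure (stoneCechUnit '' C) ↔ y ∈ C := by
  refine ⟨fun hy => ?_, fun hy => subset_closure (mem_image_of_mem _ hy)⟩
  by_contra hyC
  obtain ⟨φ, hφ, hφy, hφC⟩ := CompletelyRegularSpace.completely_regular y C hC hyC
  have hclosure : closure (stoneCechUnit '' C) ⊆ stoneCechExtend hφ ⁻¹' {1} := by
    refine closure_minimal ?_ (isClosed_singleton.preimage (continuous_stoneCechExtend hφ))
    rintro _ ⟨c, hc, rfl⟩
    simpa [stoneCechExtend_stoneCechUnit] using hφC hc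
  have := hclosure hy
  simp [stoneCechExtend_stoneCechUnit, hφy] at this

variable {f : X → Y}

noncomputable def stoneCechMap (hf : Continuous f) : StoneCech X → StoneCech Y :=
  stoneCechExtend (continuous_stoneCechUnit.comp hf)

theorem continuous_stoneCechMap (hf : Continuous f) : Continuous (stoneCechMap hf) :=
  continuous_stoneCechExtend _

@[simp]
theorem stoneCechMap_stoneCechUnit (hf : Continuous f) (x : X) :
    stoneCechMap hf (stoneCechUnit x) = stoneCechUnit (f x) :=
  stoneCechExtend_stoneCechUnit _ x

theorem range_stoneCechMap (hf : Continuous f) :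
    range (stoneCechMap hf) = closure (stoneCechUnit '' range f) := by
  have hclosed : IsClosedMap (stoneCechMap hf) := (continuous_stoneCechMap hf).isClosedMap
  rw [← image_univ, ← denseRange_stoneCechUnit.closure_range,
    ← hclosed.closure_image_eq_of_continuous (continuous_stoneCechMap hf), ← range_comp,
    ← range_comp, stoneCechMap, stoneCechExtend_extends]

theorem stoneCechMap_injective [NormalSpace Y] (hf : IsClosedEmbedding f) :
    Injective (stoneCechMap hf.continuous) := by
  intro z₁ z₂ hz
  by_contra hne
  obtain ⟨φ, hφ, hφz₁, hφz₂⟩ :=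
    CompletelyRegularSpace.completely_regular z₁ {z₂} isClosed_singleton hne
  obtain ⟨ψ, hψ⟩ :=
    ContinuousMap.exists_extension' hf ⟨φ ∘ stoneCechUnit, hφ.comp continuous_stoneCechUnit⟩
  -- Tietze: `φ` restricted to `X` extends along `f` to `ψ`, so `φ` factors through `βf`.
  have hfactor : stoneCechExtend ψ.continuous ∘ stoneCechMap hf.continuous = φ := by
    refine stoneCech_hom_ext ((continuous_stoneCechExtend _).comp (continuous_stoneCechMap _))
      hφ ?_
    ext x
    simpa [stoneCechMap_stoneCechUnit, stoneCechExtend_stoneCechUnit] using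
      congrArg Subtype.val (congrFun hψ x)
  have hφz : φ z₁ = φ z₂ := by
    rw [← hfactor]
    exact congrArg (stoneCechExtend ψ.continuous) hz
  rw [hφz₁, hφz₂ rfl] at hφz
  exact zero_ne_one hφz

variable [NormalSpace Y] [CompletelyRegularSpace Y]

theorem image_stoneCechMap_compl_range (hf : IsClosedEmbedding f) :
    stoneCechMap hf.continuous '' (range stoneCechUnit)ᶜ
      = closure (stoneCechUnit '' range f) \ range stoneCechUnit := by
  have hunit : stoneCechMap hf.continuous '' range stoneCechUnit = stoneCechUnit '' range f := by
    rw [← range_comp, ← range_comp, stoneCechMap, stoneCechExtend_extends]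
  rw [image_compl_eq_range_sdiff_image (stoneCechMap_injective hf), range_stoneCechMap, hunit]
  ext z
  constructor
  · rintro ⟨hz, hzf⟩
    refine ⟨hz, ?_⟩
    rintro ⟨y, rfl⟩
    exact hzf (mem_image_of_mem _ ((stoneCechUnit_mem_closure_image_iff hf.isClosed_range).1 hz))
  · exact fun ⟨hz, hzY⟩ => ⟨hz, fun hzf => hzY (image_subset_range _ _ hzf)⟩

noncomputable def stoneCechRemainderHomeomorph (hf : IsClosedEmbedding f) :
    ↥(range (stoneCechUnit : X → StoneCech X))ᶜ
      ≃ₜ ↥(closure (stoneCechUnit '' range f) \ range stoneCechUnit) :=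
  ((continuous_stoneCechMap hf.continuous).isClosedEmbedding
      (stoneCechMap_injective hf)).isEmbedding.homeomorphImage _ |>.trans <|
    .setCongr (image_stoneCechMap_compl_range hf)

end StoneCech

namespace StdSeq

variable (A : StdSeq)

theorem Icc_lo_hi_subset (m : ℕ) : Icc (A.lo m) (A.hi m) ⊆ Icc 0 1 :=
  Icc_subset_Icc (A.std.1 m).1 (A.std.1 m).2.2

noncomputable def param (p : Mspace) : Mspace :=
  (A.col p.1, inclusion (A.Icc_lo_hi_subset p.1) ((iccHomeoI _ _ (A.std.1 p.1).2.1).symm p.2))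

theorem param_mem_interval (p : Mspace) : A.param p ∈ A.interval p.1 :=
  ⟨rfl, ((iccHomeoI _ _ (A.std.1 p.1).2.1).symm p.2).2⟩

theorem range_param_column (m : ℕ) : range (fun x => A.param (m, x)) = A.interval m := by
  refine Subset.antisymm (range_subset_iff.2 fun x => A.param_mem_interval (m, x)) ?_
  rintro ⟨n, y⟩ ⟨rfl, hy⟩
  exact ⟨iccHomeoI _ _ (A.std.1 m).2.1 ⟨y, hy⟩, by ext <;> simp [param]⟩

theorem param_injective : Injective A.param := by
  rintro ⟨m, x⟩ ⟨k, y⟩ h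
  obtain rfl : m = k := by
    by_contra hmk
    exact disjoint_left.1 (A.std.2.1 hmk) (A.param_mem_interval (m, x))
      (h ▸ A.param_mem_interval (k, y))
  exact congrArg _ ((iccHomeoI _ _ (A.std.1 m).2.1).symm.injective
    (inclusion_injective (A.Icc_lo_hi_subset m) (congrArg Prod.snd h)))

theorem isClosedEmbedding_param : IsClosedEmbedding A.param := by
  refine isClosedEmbedding_of_locallyFinite_columns (fun m => ?_) ?_ A.param_injective
  · exact (continuous_const (y := A.col m)).prodMk <|
      (continuous_inclusion (A.Icc_lo_hi_subset m)).comp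
        (iccHomeoI _ _ (A.std.1 m).2.1).symm.continuous
  · simp only [range_param_column]
    exact A.std.2.2

theorem range_param : range A.param = A.union := by
  ext p
  simp [StdSeq.union, ← range_param_column]

end StdSeq

/-- if `𝒜` is a standard sequence then `⋃𝒜` (with the subspace topology)
is homeomorphic to `𝕄`, and `𝕄*_𝒜` is homeomorphic to `𝕄*`. -/
theorem stdSeq_union_homeo_M_and_mstarOf_homeo_Mstar (A : StdSeq) :
    Nonempty (↥A.union ≃ₜ Mspace) ∧ Nonempty (↥A.mstarOf ≃ₜ ↥MstarS) := by
  have hparam := A.isClosedEmbedding_param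
  have hremainder := stoneCechRemainderHomeomorph hparam
  rw [A.range_param] at hremainder
  exact ⟨⟨(hparam.isEmbedding.toHomeomorph.trans (.setCongr A.range_param)).symm⟩,
    ⟨hremainder.symm⟩⟩
end
end

section
/- Let {[a_m,b_m] : m ∈ ℕ} be a standard sequence, let (x_m) be a selector sequence for it (a_m < x_m < b_m for all m), and let u ∈ ℕ*. Then x_u := u-lim{x_m} is a cut point of the continuum [a_m,b_m]_u; that is, [a_m,b_m]_u ∖ {x_u} is not connected. -/
open Set Topology Filter

noncomputable section

/-- `βℕ`, realized as the space of ultrafilters on `ℕ`. -/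
abbrev betaN : Type := Ultrafilter ℕ

/-- The copy of `ℕ` inside `βℕ` (the principal ultrafilters). -/
def Ncopy : Set betaN := Set.range (pure : ℕ → betaN)

/-- `ℕ* = βℕ ∖ ℕ`. -/
def NstarS : Set betaN := Ncopyᶜ

/-- `u-lim A_m = ⋂_{U ∈ u} cl_{β𝕄}(⋃_{m ∈ U} A_m)` for subsets `A_m ⊆ 𝕄`. -/
def ulim (u : Ultrafilter ℕ) (A : ℕ → Set Mspace) : Set betaM :=
  ⋂ U ∈ u, closure (stoneCechUnit '' ⋃ m ∈ U, A m)

/-- The `u`-limit point `x_u` of a sequence of points of `𝕄`. -/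
def upt (u : Ultrafilter ℕ) (x : ℕ → Mspace) : betaM :=
  Ultrafilter.extend (fun m => stoneCechUnit (x m)) u

/-- A selector sequence for a standard sequence: `a_m < x_m < b_m` for all `m`. -/
def StdSeq.Selector (A : StdSeq) (x : ℕ → Mspace) : Prop :=
  ∀ m, (x m).1 = A.col m ∧ A.lo m < ((x m).2 : ℝ) ∧ ((x m).2 : ℝ) < A.hi m

/-!
Split each interval at the selected point into `L_m = [a_m, x_m]` and `R_m = [x_m, b_m]`, and let
`L = ⋃ L_m`, `R = ⋃ R_m`, closed in `𝕄` by local finiteness. Then `[a_m,b_m]_u ⊆ cl L ∪ cl R`.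
Because `𝕄` is normal, `cl C ∩ cl D ⊆ cl (C ∩ D)` in `β𝕄` for closed `C, D ⊆ 𝕄`; as `L_m` meets
`R_k` only if `m = k`, and then only in `x_m`, a point of `[a_m,b_m]_u ∩ cl L ∩ cl R` lies in
`cl {x_m : m ∈ U}` for every `U ∈ u`, hence equals `x_u`. So `cl L` and `cl R` separate
`[a_m,b_m]_u ∖ {x_u}`, and both pieces are nonempty: `a_u ∈ cl L ∖ cl R` and `b_u ∈ cl R ∖ cl L`.
-/

section Topology

variable {X : Type*} [TopologicalSpace X]

theorem LocallyFinite.isClosed_range {ι : Type*} [T1Space X] {f : ι → Set X}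
    (hf : LocallyFinite f) {y : ι → X} (hy : ∀ i, y i ∈ f i) : IsClosed (range y) := by
  rw [← iUnion_singleton_eq_range]
  exact (hf.subset fun i => singleton_subset_iff.2 (hy i)).isClosed_iUnion
    fun _ => isClosed_singleton

theorem LocallyFinite.isClosed_biUnion {ι : Type*} {f : ι → Set X} (hf : LocallyFinite f)
    (hc : ∀ i, IsClosed (f i)) (s : Set ι) : IsClosed (⋃ i ∈ s, f i) := by
  rw [biUnion_eq_iUnion]
  exact (hf.comp_injective Subtype.val_injective).isClosed_iUnion fun i => hc i

theorem not_isPreconnected_diff_singleton {K F G : Set X} {x a b : X} (hF : IsClosed F)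
    (hG : IsClosed G) (hKFG : K ⊆ F ∪ G) (hsep : K ∩ F ∩ G ⊆ {x}) (ha : a ∈ K ∩ F)
    (hb : b ∈ K ∩ G) (hax : a ≠ x) (hbx : b ≠ x) : ¬ IsPreconnected (K \ {x}) := by
  rw [isPreconnected_closed_iff]
  intro h
  obtain ⟨p, ⟨hpK, hpx⟩, hpF, hpG⟩ := h F G hF hG (sdiff_subset.trans hKFG)
    ⟨a, ⟨ha.1, hax⟩, ha.2⟩ ⟨b, ⟨hb.1, hbx⟩, hb.2⟩
  exact hpx (hsep ⟨⟨hpK, hpF⟩, hpG⟩)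

end Topology

section StoneCech

variable {X : Type*} [TopologicalSpace X] [NormalSpace X]

theorem disjoint_closure_image_stoneCechUnit {C D : Set X} (hC : IsClosed C) (hD : IsClosed D)
    (hCD : Disjoint C D) :
    Disjoint (closure (stoneCechUnit '' C)) (closure (stoneCechUnit '' D)) := by
  obtain ⟨f, hf0, hf1, hf01⟩ := exists_continuous_zero_one_of_isClosed hC hD hCD
  have hg : Continuous fun y => (⟨f y, hf01 y⟩ : unitInterval) := f.continuous.subtype_mk _
  have hF := continuous_stoneCechExtend hg
  have hC' : closure (stoneCechUnit '' C) ⊆ stoneCechExtend hg ⁻¹' {0} := by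
    refine closure_minimal ?_ (isClosed_singleton.preimage hF)
    rintro _ ⟨c, hc, rfl⟩
    simp [stoneCechExtend_stoneCechUnit, hf0 hc]
  have hD' : closure (stoneCechUnit '' D) ⊆ stoneCechExtend hg ⁻¹' {1} := by
    refine closure_minimal ?_ (isClosed_singleton.preimage hF)
    rintro _ ⟨d, hd, rfl⟩
    simp [stoneCechExtend_stoneCechUnit, hf1 hd]
  exact ((disjoint_singleton.2 zero_ne_one).preimage _).mono hC' hD'

theorem closure_image_stoneCechUnit_inter {C D : Set X} (hC : IsClosed C) (hD : IsClosed D) :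
    closure (stoneCechUnit '' C) ∩ closure (stoneCechUnit '' D) ⊆
      closure (stoneCechUnit '' (C ∩ D)) := by
  intro q hq
  by_contra hqCD
  obtain ⟨N, ⟨hNq, hNc⟩, hN⟩ :=
    (closed_nhds_basis q).mem_iff.1 (isClosed_closure.isOpen_compl.mem_nhds hqCD)
  have hlocal : ∀ E : Set X, q ∈ closure (stoneCechUnit '' E) →
      q ∈ closure (stoneCechUnit '' (E ∩ stoneCechUnit ⁻¹' N)) := by
    intro E hE
    refine closure_mono ?_ (isOpen_interior.inter_closure ⟨mem_interior_iff_mem_nhds.2 hNq, hE⟩)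
    rw [inter_comm, ← image_inter_preimage]
    exact image_mono (inter_subset_inter_right _ (preimage_mono interior_subset))
  have hCN := hC.inter (hNc.preimage continuous_stoneCechUnit)
  have hDN := hD.inter (hNc.preimage continuous_stoneCechUnit)
  refine disjoint_left.1 (disjoint_closure_image_stoneCechUnit hCN hDN ?_)
    (hlocal C hq.1) (hlocal D hq.2)
  rw [disjoint_left]
  rintro y ⟨hyC, hyN⟩ ⟨hyD, -⟩
  exact hN hyN (subset_closure (mem_image_of_mem _ ⟨hyC, hyD⟩))

end StoneCech

section UltrafilterLimit

variable (u : Ultrafilter ℕ)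

theorem tendsto_upt (y : ℕ → Mspace) :
    Tendsto (fun m => stoneCechUnit (y m)) u (𝓝 (upt u y)) :=
  ultrafilter_extend_eq_iff.1 rfl

theorem upt_mem_closure_image {y : ℕ → Mspace} {S : Set Mspace}
    (h : ∀ᶠ m in (u : Filter ℕ), y m ∈ S) : upt u y ∈ closure (stoneCechUnit '' S) :=
  mem_closure_of_tendsto (tendsto_upt u y) (h.mono fun _ hm => mem_image_of_mem _ hm)

theorem upt_mem_closure_iUnion {y : ℕ → Mspace} {L : ℕ → Set Mspace} (hy : ∀ m, y m ∈ L m) :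
    upt u y ∈ closure (stoneCechUnit '' ⋃ m, L m) :=
  upt_mem_closure_image u (Eventually.of_forall fun m => mem_iUnion_of_mem m (hy m))

theorem upt_notMem_closure_image {y : ℕ → Mspace} {S : Set Mspace} (hy : IsClosed (range y))
    (hS : IsClosed S) (hyS : ∀ m, y m ∉ S) : upt u y ∉ closure (stoneCechUnit '' S) := by
  have hdisj : Disjoint (range y) S := by
    rw [disjoint_left]
    rintro _ ⟨m, rfl⟩
    exact hyS m
  exact disjoint_left.1 (disjoint_closure_image_stoneCechUnit hy hS hdisj)
    (upt_mem_closure_image u (Eventually.of_forall mem_range_self))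

theorem eq_upt_of_forall_mem_closure {y : ℕ → Mspace} {p : betaM}
    (h : ∀ U ∈ u, p ∈ closure (stoneCechUnit '' (y '' U))) : p = upt u y := by
  have hp : ClusterPt p (u.map fun m => stoneCechUnit (y m)) := by
    refine clusterPt_iff_forall_mem_closure.2 fun s hs => closure_mono ?_ (h _ hs)
    rw [← image_comp]
    exact image_preimage_subset _ _
  exact tendsto_nhds_unique (Ultrafilter.clusterPt_iff.1 hp) (tendsto_upt u y)

theorem upt_mem_ulim {A : ℕ → Set Mspace} {y : ℕ → Mspace} (hy : ∀ m, y m ∈ A m) :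
    upt u y ∈ ulim u A :=
  mem_iInter₂.2 fun _ hU =>
    upt_mem_closure_image u (Filter.mem_of_superset hU fun m hm => mem_biUnion hm (hy m))

theorem ulim_subset_closure_iUnion (A : ℕ → Set Mspace) :
    ulim u A ⊆ closure (stoneCechUnit '' ⋃ m, A m) := fun p hp => by
  simpa using mem_iInter₂.1 hp univ univ_mem

theorem ulim_inter_closure_inter_closure_subset {A L R : ℕ → Set Mspace} {x : ℕ → Mspace}
    (hA : ∀ m, A m = L m ∪ R m) (hL : LocallyFinite L) (hR : LocallyFinite R)
    (hLc : ∀ m, IsClosed (L m)) (hRc : ∀ m, IsClosed (R m))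
    (hLR : ∀ m k z, z ∈ L m → z ∈ R k → m = k ∧ z = x m) :
    ulim u A ∩ closure (stoneCechUnit '' ⋃ m, L m) ∩ closure (stoneCechUnit '' ⋃ m, R m) ⊆
      {upt u x} := by
  rintro p ⟨⟨hpA, hpL⟩, hpR⟩
  refine eq_upt_of_forall_mem_closure u fun U hU => ?_
  have hmem : ∀ m k z, z ∈ L m → z ∈ R k → m ∈ U ∨ k ∈ U → z ∈ x '' U := by
    rintro m k z hzL hzR hmk
    obtain ⟨rfl, rfl⟩ := hLR m k z hzL hzR
    exact ⟨m, hmk.elim id id, rfl⟩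
  have hpU := mem_iInter₂.1 hpA U hU
  simp only [hA, iUnion_union_distrib, image_union, closure_union] at hpU
  rcases hpU with hpU | hpU
  · refine closure_mono (image_mono ?_) (closure_image_stoneCechUnit_inter
      (hL.isClosed_biUnion hLc U) (hR.isClosed_iUnion hRc) ⟨hpU, hpR⟩)
    rintro z ⟨hzL, hzR⟩
    obtain ⟨m, hm, hzm⟩ := mem_iUnion₂.1 hzL
    obtain ⟨k, hzk⟩ := mem_iUnion.1 hzR
    exact hmem m k z hzm hzk (.inl hm)
  · refine closure_mono (image_mono ?_) (closure_image_stoneCechUnit_inter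
      (hL.isClosed_iUnion hLc) (hR.isClosed_biUnion hRc U) ⟨hpL, hpU⟩)
    rintro z ⟨hzL, hzR⟩
    obtain ⟨m, hzm⟩ := mem_iUnion.1 hzL
    obtain ⟨k, hk, hzk⟩ := mem_iUnion₂.1 hzR
    exact hmem m k z hzm hzk (.inr hk)

end UltrafilterLimit

theorem isClosed_colIcc (n : ℕ) (s t : ℝ) : IsClosed (colIcc n s t) :=
  (isClosed_singleton.preimage continuous_fst).inter
    (isClosed_Icc.preimage (continuous_subtype_val.comp continuous_snd))

theorem eq_of_mem_colIcc_of_mem_colIcc {p z : Mspace} {s t : ℝ} (hzl : z ∈ colIcc p.1 s p.2)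
    (hzr : z ∈ colIcc p.1 p.2 t) : z = p :=
  Prod.ext hzl.1 (Subtype.ext (le_antisymm hzl.2.2 hzr.2.1))

namespace StdSeq

variable (A : StdSeq)

theorem lo_mem_Icc (m : ℕ) : A.lo m ∈ Icc (0 : ℝ) 1 :=
  ⟨(A.std.1 m).1, (A.std.1 m).2.1.le.trans (A.std.1 m).2.2⟩

theorem hi_mem_Icc (m : ℕ) : A.hi m ∈ Icc (0 : ℝ) 1 :=
  ⟨(A.std.1 m).1.trans (A.std.1 m).2.1.le, (A.std.1 m).2.2⟩

/-- The endpoint `a_m`. -/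
def leftEnd (m : ℕ) : Mspace := (A.col m, ⟨A.lo m, A.lo_mem_Icc m⟩)

/-- The endpoint `b_m`. -/
def rightEnd (m : ℕ) : Mspace := (A.col m, ⟨A.hi m, A.hi_mem_Icc m⟩)

/-- `L_m = [a_m, x_m]`. -/
def leftPart (x : ℕ → Mspace) (m : ℕ) : Set Mspace := colIcc (A.col m) (A.lo m) (x m).2

/-- `R_m = [x_m, b_m]`. -/
def rightPart (x : ℕ → Mspace) (m : ℕ) : Set Mspace := colIcc (A.col m) (x m).2 (A.hi m)

theorem locallyFinite_interval : LocallyFinite A.interval := A.std.2.2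

theorem eq_of_mem_interval {m k : ℕ} {z : Mspace} (hm : z ∈ A.interval m)
    (hk : z ∈ A.interval k) : m = k :=
  by_contra fun hmk => disjoint_left.1 (A.std.2.1 hmk) hm hk

theorem leftEnd_mem_interval (m : ℕ) : A.leftEnd m ∈ A.interval m :=
  ⟨rfl, le_rfl, (A.std.1 m).2.1.le⟩

theorem rightEnd_mem_interval (m : ℕ) : A.rightEnd m ∈ A.interval m :=
  ⟨rfl, (A.std.1 m).2.1.le, le_rfl⟩

theorem isClosed_range_leftEnd : IsClosed (range A.leftEnd) :=
  A.locallyFinite_interval.isClosed_range A.leftEnd_mem_interval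

theorem isClosed_range_rightEnd : IsClosed (range A.rightEnd) :=
  A.locallyFinite_interval.isClosed_range A.rightEnd_mem_interval

variable {A} {x : ℕ → Mspace}

namespace Selector

variable (hx : A.Selector x)
include hx

theorem mem_interval (m : ℕ) : x m ∈ A.interval m :=
  ⟨(hx m).1, (hx m).2.1.le, (hx m).2.2.le⟩

theorem mem_leftPart (m : ℕ) : x m ∈ A.leftPart x m :=
  ⟨(hx m).1, (hx m).2.1.le, le_rfl⟩

theorem mem_rightPart (m : ℕ) : x m ∈ A.rightPart x m :=
  ⟨(hx m).1, le_rfl, (hx m).2.2.le⟩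

theorem leftEnd_mem_leftPart (m : ℕ) : A.leftEnd m ∈ A.leftPart x m :=
  ⟨rfl, le_rfl, (hx m).2.1.le⟩

theorem rightEnd_mem_rightPart (m : ℕ) : A.rightEnd m ∈ A.rightPart x m :=
  ⟨rfl, (hx m).2.2.le, le_rfl⟩

theorem leftPart_subset (m : ℕ) : A.leftPart x m ⊆ A.interval m :=
  fun _ ⟨hn, hlo, hhi⟩ => ⟨hn, hlo, hhi.trans (hx m).2.2.le⟩

theorem rightPart_subset (m : ℕ) : A.rightPart x m ⊆ A.interval m :=
  fun _ ⟨hn, hlo, hhi⟩ => ⟨hn, (hx m).2.1.le.trans hlo, hhi⟩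

theorem interval_eq_union (m : ℕ) : A.interval m = A.leftPart x m ∪ A.rightPart x m := by
  refine Subset.antisymm (fun z ⟨hn, hlo, hhi⟩ => ?_) (union_subset (hx.leftPart_subset m)
    (hx.rightPart_subset m))
  rcases le_total (z.2 : ℝ) (x m).2 with h | h
  exacts [.inl ⟨hn, hlo, h⟩, .inr ⟨hn, h, hhi⟩]

theorem eq_of_mem_leftPart_of_mem_rightPart {m k : ℕ} {z : Mspace} (hzl : z ∈ A.leftPart x m)
    (hzr : z ∈ A.rightPart x k) : m = k ∧ z = x m := by
  obtain rfl := A.eq_of_mem_interval (hx.leftPart_subset m hzl) (hx.rightPart_subset k hzr)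
  rw [leftPart, rightPart, ← (hx m).1] at *
  exact ⟨rfl, eq_of_mem_colIcc_of_mem_colIcc hzl hzr⟩

theorem leftEnd_notMem_rightPart (m : ℕ) : A.leftEnd m ∉ ⋃ k, A.rightPart x k := by
  rw [mem_iUnion]
  rintro ⟨k, hk⟩
  obtain rfl := A.eq_of_mem_interval (A.leftEnd_mem_interval m) (hx.rightPart_subset k hk)
  exact (hx m).2.1.not_ge hk.2.1

theorem rightEnd_notMem_leftPart (m : ℕ) : A.rightEnd m ∉ ⋃ k, A.leftPart x k := by
  rw [mem_iUnion]
  rintro ⟨k, hk⟩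
  obtain rfl := A.eq_of_mem_interval (A.rightEnd_mem_interval m) (hx.leftPart_subset k hk)
  exact (hx m).2.2.not_ge hk.2.2

end Selector

end StdSeq

theorem upt_is_cut_point_of_ulim_general (A : StdSeq) (x : ℕ → Mspace) (hx : A.Selector x)
    (u : betaN) :
    upt u x ∈ ulim u A.interval ∧
      ¬ IsPreconnected (ulim u A.interval \ {upt u x}) := by
  have hL := A.locallyFinite_interval.subset hx.leftPart_subset
  have hR := A.locallyFinite_interval.subset hx.rightPart_subset
  have hLc : ∀ m, IsClosed (A.leftPart x m) := fun _ => isClosed_colIcc _ _ _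
  have hRc : ∀ m, IsClosed (A.rightPart x m) := fun _ => isClosed_colIcc _ _ _
  set F := closure (stoneCechUnit '' ⋃ m, A.leftPart x m)
  set G := closure (stoneCechUnit '' ⋃ m, A.rightPart x m)
  have hcover : ulim u A.interval ⊆ F ∪ G := by
    simpa only [hx.interval_eq_union, iUnion_union_distrib, image_union, closure_union]
      using ulim_subset_closure_iUnion u A.interval
  have hsep : ulim u A.interval ∩ F ∩ G ⊆ {upt u x} :=
    ulim_inter_closure_inter_closure_subset u hx.interval_eq_union hL hR hLc hRc
      fun _ _ _ => hx.eq_of_mem_leftPart_of_mem_rightPart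
  have hxF : upt u x ∈ F := upt_mem_closure_iUnion u hx.mem_leftPart
  have hxG : upt u x ∈ G := upt_mem_closure_iUnion u hx.mem_rightPart
  have haF : upt u A.leftEnd ∈ F := upt_mem_closure_iUnion u hx.leftEnd_mem_leftPart
  have hbG : upt u A.rightEnd ∈ G := upt_mem_closure_iUnion u hx.rightEnd_mem_rightPart
  have haG : upt u A.leftEnd ∉ G := upt_notMem_closure_image u A.isClosed_range_leftEnd
    (hR.isClosed_iUnion hRc) hx.leftEnd_notMem_rightPart
  have hbF : upt u A.rightEnd ∉ F := upt_notMem_closure_image u A.isClosed_range_rightEnd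
    (hL.isClosed_iUnion hLc) hx.rightEnd_notMem_leftPart
  exact ⟨upt_mem_ulim u hx.mem_interval, not_isPreconnected_diff_singleton isClosed_closure
    isClosed_closure hcover hsep ⟨upt_mem_ulim u A.leftEnd_mem_interval, haF⟩
    ⟨upt_mem_ulim u A.rightEnd_mem_interval, hbG⟩ (fun h => haG (h ▸ hxG))
    (fun h => hbF (h ▸ hxF))⟩

/-- for a selector sequence `(x_m)` of a standard sequence and `u ∈ ℕ*`,
the point `x_u` is a cut point of the continuum `[a_m,b_m]_u`. -/
theorem upt_is_cut_point_of_ulim (A : StdSeq) (x : ℕ → Mspace) (hx : A.Selector x)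
    (u : betaN) (hu : u ∈ NstarS) :
    upt u x ∈ ulim u A.interval ∧
      ¬ IsPreconnected (ulim u A.interval \ {upt u x}) :=
  upt_is_cut_point_of_ulim_general A x hx u
end
end

section
/- Assume ω₁ < 𝔟, i.e., every family of ℵ₁ many functions in ℕ^ℕ has an upper bound under eventual domination. Then for every set S and every coherent ω^ω-family ℋ = {h_f : f ∈ ω^ω} with values in S, there is a countable set C ⊆ S that mod finite contains the range of each h_f, i.e., ran(h_f) ∖ C is finite for every f ∈ ω^ω. -/
open Set Topology Filter

noncomputable section

/-- Eventual domination `f ≤* g`: `f n ≤ g n` for all but finitely many `n`. -/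
def EvDomLE (f g : ℕ → ℕ) : Prop := ∀ᶠ n in Filter.cofinite, f n ≤ g n

/-- The domain `{(n,m) : m < f(n)}` of the `f`-th member of an `ω^ω`-family. -/
def ooDom (f : ℕ → ℕ) : Set (ℕ × ℕ) := {p : ℕ × ℕ | p.2 < f p.1}

/-- Coherence of an `ω^ω`-family (presented as total functions; only values on
`ooDom f` matter): whenever `f ≤* g`, `h_f` and `h_g` agree on all but finitely many
points of the common domain. -/
def CoherentFam {S : Type} (h : (ℕ → ℕ) → ℕ × ℕ → S) : Prop :=
  ∀ f g : ℕ → ℕ, EvDomLE f g → {p : ℕ × ℕ | p ∈ ooDom f ∩ ooDom g ∧ h f p ≠ h g p}.Finite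


lemma ranDiffFinite {S : Type} {h : (ℕ → ℕ) → ℕ × ℕ → S} (hcoh : CoherentFam h)
    {f g : ℕ → ℕ} (hfg : EvDomLE f g) :
    ((h f '' ooDom f) \ (h g '' ooDom g)).Finite := by
  have hN : {n : ℕ | ¬ f n ≤ g n}.Finite := Filter.eventually_cofinite.1 hfg
  have h1 : (ooDom f \ ooDom g).Finite := by
    refine (hN.biUnion (fun n _ => ((Set.finite_singleton n).prod (Set.finite_Iio (f n))))).subset ?_
    rintro ⟨n, m⟩ ⟨hf, hg⟩
    simp only [ooDom, mem_setOf_eq] at hf hg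
    refine mem_biUnion (x := n) ?_ ?_
    · simp only [mem_setOf_eq]; omega
    · exact ⟨rfl, hf⟩
  have h2 := hcoh f g hfg
  refine (((h1.union h2).image (h f))).subset ?_
  rintro s ⟨⟨p, hp, rfl⟩, hs⟩
  by_cases hpg : p ∈ ooDom g
  · by_cases heq : h f p = h g p
    · exact absurd ⟨p, hpg, heq.symm⟩ hs
    · exact ⟨p, Or.inr ⟨⟨hp, hpg⟩, heq⟩, rfl⟩
  · exact ⟨p, Or.inl ⟨hp, hpg⟩, rfl⟩

lemma countable_bound {F : Set (ℕ → ℕ)} (hF : F.Countable) : ∃ g, ∀ f ∈ F, EvDomLE f g := by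
  rcases F.eq_empty_or_nonempty with rfl | hne
  · exact ⟨id, by simp⟩
  obtain ⟨e, rfl⟩ := hF.exists_eq_range hne
  refine ⟨fun n => (Finset.range (n+1)).sup (fun i => e i n), ?_⟩
  rintro f ⟨i, rfl⟩
  refine Filter.eventually_cofinite.2 ((Set.finite_Iio i).subset ?_)
  intro n hn
  simp only [mem_setOf_eq, not_le] at hn
  simp only [mem_Iio]
  by_contra hni
  push_neg at hni
  exact absurd (Finset.le_sup (f := fun j => e j n) (Finset.mem_range.2 (Nat.lt_succ_of_le hni))) (not_le.2 hn)

/-- if `ω₁ < 𝔟` then every coherent `ω^ω`-family has ranges mod-finite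
contained in a single countable set. -/
theorem coherent_family_countable_range
    (hb : ∀ F : Set (ℕ → ℕ), Cardinal.mk F ≤ Cardinal.aleph 1 →
      ∃ g : ℕ → ℕ, ∀ f ∈ F, EvDomLE f g)
    (S : Type) (h : (ℕ → ℕ) → ℕ × ℕ → S) (hcoh : CoherentFam h) :
    ∃ C : Set S, C.Countable ∧ ∀ f : ℕ → ℕ, ((h f '' ooDom f) \ C).Finite := by
  by_contra hCon
  push_neg at hCon
  have hC : ∀ C : Set S, C.Countable → ∃ f : ℕ → ℕ, ¬ ((h f '' ooDom f) \ C).Finite := by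
    intro C hc
    obtain ⟨f, hf⟩ := hCon C hc
    exact ⟨f, hf⟩
  set I := (Cardinal.aleph 1).ord.ToType with hIdef
  have key : ∀ (i : I) (prev : ∀ j : I, j < i → (ℕ → ℕ)),
      ∃ g : ℕ → ℕ, (∀ j (hj : j < i), EvDomLE (prev j hj) g) ∧
        ¬ ((h g '' ooDom g) \ ⋃ (j : Iio i), h (prev j.1 j.2) '' ooDom (prev j.1 j.2)).Finite := by
    intro i prev
    have hcnt : (Iio i).Countable :=
      (Cardinal.countable_iff_lt_aleph_one _).2 (Cardinal.mk_Iio_ord_toType i)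
    haveI : Countable (Iio i) := hcnt.to_subtype
    have hCc : (⋃ (j : Iio i), h (prev j.1 j.2) '' ooDom (prev j.1 j.2)).Countable :=
      Set.countable_iUnion fun j => (Set.to_countable _).image _
    obtain ⟨g0, hg0⟩ := hC _ hCc
    have hFam : ({g0} ∪ (⋃ (j : Iio i), {prev j.1 j.2}) : Set (ℕ → ℕ)).Countable :=
      (Set.countable_singleton g0).union
        (Set.countable_iUnion fun j => Set.countable_singleton _)
    obtain ⟨g, hg⟩ := countable_bound hFam
    have hg0g : EvDomLE g0 g := hg g0 (Or.inl rfl)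
    refine ⟨g, fun j hj => hg _ (Or.inr (mem_iUnion.2 ⟨⟨j, hj⟩, rfl⟩)), ?_⟩
    intro hfin2
    apply hg0
    have hfin := ranDiffFinite hcoh hg0g
    refine (hfin.union hfin2).subset ?_
    intro s hs
    by_cases hsg : s ∈ h g '' ooDom g
    · exact Or.inr ⟨hsg, hs.2⟩
    · exact Or.inl ⟨hs.1, hsg⟩
  choose step hstep1 hstep2 using key
  let F : I → (ℕ → ℕ) := fun i =>
    WellFounded.fix wellFounded_lt (fun i IH => step i IH) i
  have hFeq : ∀ i : I, F i = step i (fun j _ => F j) := fun i =>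
    WellFounded.fix_eq wellFounded_lt (fun i IH => step i IH) i
  have hP1 : ∀ i j : I, j < i → EvDomLE (F j) (F i) := by
    intro i j hj
    rw [hFeq i]
    exact hstep1 i (fun j _ => F j) j hj
  have hP2 : ∀ i : I,
      ¬ ((h (F i) '' ooDom (F i)) \ ⋃ (j : Iio i), h (F j.1) '' ooDom (F j.1)).Finite := by
    intro i
    have := hstep2 i (fun j _ => F j)
    rw [← hFeq i] at this
    exact this
  obtain ⟨fs, hfs⟩ := hb (Set.range F) (by
    calc Cardinal.mk (Set.range F) ≤ Cardinal.mk I := Cardinal.mk_range_le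
    _ = Cardinal.aleph 1 := Cardinal.mk_ord_toType _)
  have hfsi : ∀ i : I, EvDomLE (F i) fs := fun i => hfs _ ⟨i, rfl⟩
  set Cs : Set S := h fs '' ooDom fs with hCs
  have hCsc : Cs.Countable := (Set.to_countable _).image _
  have hsel : ∀ i : I, ∃ s : S, s ∈ ((h (F i) '' ooDom (F i)) \
      ⋃ (j : Iio i), h (F j.1) '' ooDom (F j.1)) ∩ Cs := by
    intro i
    by_contra hemp
    push_neg at hemp
    apply hP2 i
    refine (ranDiffFinite hcoh (hfsi i)).subset ?_
    intro s hs
    exact ⟨hs.1, fun hsc => hemp s ⟨hs, hsc⟩⟩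
  choose sel hsel1 using hsel
  have hinj : Function.Injective (fun i : I => (⟨sel i, (hsel1 i).2⟩ : Cs)) := by
    intro i j hij
    simp only [Subtype.mk.injEq] at hij
    by_contra hne
    rcases lt_or_gt_of_ne hne with hlt | hlt
    · -- i < j : sel i ∈ range of F i ⊆ union over Iio j, sel j not in union
      exact (hsel1 j).1.2 (hij ▸ mem_iUnion.2 ⟨⟨i, hlt⟩, (hsel1 i).1.1⟩)
    · exact (hsel1 i).1.2 (hij ▸ mem_iUnion.2 ⟨⟨j, hlt⟩, (hsel1 j).1.1⟩)
  have h1 : Cardinal.aleph 1 ≤ Cardinal.aleph 0 := by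
    calc Cardinal.aleph 1 = Cardinal.mk I := (Cardinal.mk_ord_toType _).symm
    _ ≤ Cardinal.mk Cs := Cardinal.mk_le_of_injective hinj
    _ ≤ Cardinal.aleph 0 := by
        rw [Cardinal.aleph_zero]
        exact Cardinal.mk_le_aleph0_iff.2 hCsc.to_subtype
  exact absurd h1 (not_le.2 (by simpa using Cardinal.aleph0_lt_aleph_one))
end
end

section
/- Let μ be a countable ordinal and let {p_ξ : ξ ∈ μ} be a ⊆*-descending sequence in 𝒫 (i.e., for ξ < η < μ, the later condition p_η extends the earlier condition p_ξ mod finite). Then the partial order 𝒫({p_ξ : ξ ∈ μ}) is countable and atomless: its underlying set is countable, and every element has two extensions that have no common extension in 𝒫({p_ξ : ξ ∈ μ}). -/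
open Set Topology Filter

noncomputable section

/-- Velickovic's poset `𝒫`: conditions are (graphs of) injective partial involutions
`p` of `ℕ` without fixed points, with `dom p = ran p`, respecting the intervals
`[2^n, 2^{n+1})`, and with `limsup_n |[2^n,2^{n+1}) ∖ dom p| = ∞`. -/
structure VelCond where
  graph : Set (ℕ × ℕ)
  func : ∀ ⦃i j k : ℕ⦄, (i, j) ∈ graph → (i, k) ∈ graph → j = k
  dom_eq_ran : Prod.fst '' graph = Prod.snd '' graph
  blocks : ∀ ⦃i j : ℕ⦄, (i, j) ∈ graph → ∀ n : ℕ,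
    (i ∈ Set.Ico (2 ^ n) (2 ^ (n + 1)) ↔ j ∈ Set.Ico (2 ^ n) (2 ^ (n + 1)))
  invol : ∀ ⦃i j : ℕ⦄, (i, j) ∈ graph → (j, i) ∈ graph ∧ i ≠ j
  growth : ∀ k : ℕ,
    {n : ℕ | k ≤ (Set.Ico (2 ^ n) (2 ^ (n + 1)) \ (Prod.fst '' graph)).ncard}.Infinite

/-- `q ⊇* p`: `q` extends `p` mod finite (all but finitely many pairs of `p` are in `q`). -/
def SupStar (q p : VelCond) : Prop := (p.graph \ q.graph).Finite

/-- `q =* p`: the symmetric difference of `p` and `q` is finite. -/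
def EqStar (q p : VelCond) : Prop := (p.graph \ q.graph).Finite ∧ (q.graph \ p.graph).Finite

lemma VelCond.graph_injective : Function.Injective VelCond.graph := by
  rintro ⟨g, _, _, _, _, _⟩ ⟨g', _, _, _, _, _⟩ h
  simp only at h
  subst h
  rfl

/-- For a fixed condition, the set of conditions mod-finite equal to it is countable. -/
lemma countable_eqStar (p₀ : VelCond) : {q : VelCond | EqStar q p₀}.Countable := by
  have hfin : {s : Set (ℕ × ℕ) | s.Finite}.Countable := by
    have := Set.countable_setOf_finite_subset (Set.countable_univ (α := ℕ × ℕ))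
    refine this.mono ?_
    intro s hs
    exact ⟨hs, Set.subset_univ _⟩
  refine Set.countable_of_injective_of_countable_image
    (f := fun q : VelCond => ((q.graph \ p₀.graph, p₀.graph \ q.graph) :
      Set (ℕ × ℕ) × Set (ℕ × ℕ))) ?_ ?_
  · intro q hq q' hq' h
    simp only [Prod.mk.injEq] at h
    apply VelCond.graph_injective
    have h1 : q.graph = (p₀.graph \ (p₀.graph \ q.graph)) ∪ (q.graph \ p₀.graph) := by
      ext x
      by_cases hx : x ∈ p₀.graph <;> simp [hx]
    have h2 : q'.graph = (p₀.graph \ (p₀.graph \ q'.graph)) ∪ (q'.graph \ p₀.graph) := by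
      ext x
      by_cases hx : x ∈ p₀.graph <;> simp [hx]
    rw [h1, h2, h.1, h.2]
  · refine (hfin.prod hfin).mono ?_
    rintro x ⟨q, hq, rfl⟩
    exact ⟨hq.2, hq.1⟩

lemma pow_block_unique {i m n : ℕ} (hm : i ∈ Set.Ico (2 ^ m) (2 ^ (m + 1)))
    (hn : i ∈ Set.Ico (2 ^ n) (2 ^ (n + 1))) : m = n := by
  by_contra h
  rcases Nat.lt_or_ge m n with h' | h'
  · exact absurd (lt_of_lt_of_le hm.2 (Nat.pow_le_pow_right (by norm_num) h')) (not_lt.2 hn.1)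
  · have h'' : n < m := lt_of_le_of_ne h' (Ne.symm h)
    exact absurd (lt_of_lt_of_le hn.2 (Nat.pow_le_pow_right (by norm_num) h'')) (not_lt.2 hm.1)

lemma mem_pair_set {i j a b : ℕ} (h : (a, b) ∈ ({(i, j), (j, i)} : Set (ℕ × ℕ))) :
    (a = i ∧ b = j) ∨ (a = j ∧ b = i) := by
  simpa [Prod.ext_iff] using h

lemma ncard_diff_pair_ge {A : Set ℕ} (hA : A.Finite) (i j : ℕ) :
    A.ncard ≤ (A \ {i, j}).ncard + 2 := by
  have h1 : A ⊆ (A \ {i, j}) ∪ {i, j} := by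
    intro x hx
    by_cases h : x ∈ ({i, j} : Set ℕ)
    · exact Or.inr h
    · exact Or.inl ⟨hx, h⟩
  calc A.ncard ≤ ((A \ {i, j}) ∪ {i, j}).ncard :=
        Set.ncard_le_ncard h1 ((hA.diff).union ((Set.finite_singleton _).insert _))
    _ ≤ (A \ {i, j}).ncard + ({i, j} : Set ℕ).ncard := Set.ncard_union_le _ _
    _ ≤ (A \ {i, j}).ncard + 2 := by
        gcongr
        exact (Set.ncard_insert_le _ _).trans (by simp)

/-- Extend a condition by one new transposition `(i j)` inside block `n`. -/
def VelCond.extend (q : VelCond) (n i j : ℕ)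
    (hi : i ∈ Set.Ico (2 ^ n) (2 ^ (n + 1))) (hj : j ∈ Set.Ico (2 ^ n) (2 ^ (n + 1)))
    (hij : i ≠ j) (hi' : i ∉ Prod.fst '' q.graph) (hj' : j ∉ Prod.fst '' q.graph) : VelCond where
  graph := q.graph ∪ {(i, j), (j, i)}
  func := by
    have hdom : ∀ ⦃a b : ℕ⦄, (a, b) ∈ q.graph → a ≠ i ∧ a ≠ j := by
      intro a b hab
      constructor <;> rintro rfl
      · exact hi' ⟨(a, b), hab, rfl⟩
      · exact hj' ⟨(a, b), hab, rfl⟩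
    rintro a b c (h1 | h1) (h2 | h2)
    · exact q.func h1 h2
    · rcases mem_pair_set h2 with ⟨rfl, rfl⟩ | ⟨rfl, rfl⟩
      · exact absurd rfl (hdom h1).1
      · exact absurd rfl (hdom h1).2
    · rcases mem_pair_set h1 with ⟨rfl, rfl⟩ | ⟨rfl, rfl⟩
      · exact absurd rfl (hdom h2).1
      · exact absurd rfl (hdom h2).2
    · rcases mem_pair_set h1 with ⟨rfl, rfl⟩ | ⟨rfl, rfl⟩ <;>
        rcases mem_pair_set h2 with ⟨h2a, rfl⟩ | ⟨h2a, rfl⟩ <;> simp_all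
  dom_eq_ran := by
    simp only [Set.image_union, q.dom_eq_ran, Set.image_insert_eq, Set.image_singleton]
    rw [Set.pair_comm j i]
  blocks := by
    rintro a b (h | h) m
    · exact q.blocks h m
    · rcases mem_pair_set h with ⟨rfl, rfl⟩ | ⟨rfl, rfl⟩
      · constructor
        · intro ha; obtain rfl := pow_block_unique ha hi; exact hj
        · intro hb; obtain rfl := pow_block_unique hb hj; exact hi
      · constructor
        · intro ha; obtain rfl := pow_block_unique ha hj; exact hi
        · intro hb; obtain rfl := pow_block_unique hb hi; exact hj
  invol := by
    rintro a b (h | h)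
    · exact ⟨Or.inl (q.invol h).1, (q.invol h).2⟩
    · rcases mem_pair_set h with ⟨rfl, rfl⟩ | ⟨rfl, rfl⟩
      · exact ⟨Or.inr (by simp), hij⟩
      · exact ⟨Or.inr (by simp), hij.symm⟩
  growth := by
    intro k
    refine ((q.growth (k + 2)).mono ?_)
    intro m hm
    simp only [Set.mem_setOf_eq] at hm ⊢
    have heq : Prod.fst '' (q.graph ∪ {(i, j), (j, i)}) = (Prod.fst '' q.graph) ∪ {i, j} := by
      simp [Set.image_union, Set.image_insert_eq]
    rw [heq, ← Set.diff_diff]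
    have hfinA : (Set.Ico (2 ^ m) (2 ^ (m + 1)) \ (Prod.fst '' q.graph)).Finite :=
      (Set.finite_Ico _ _).diff
    have := ncard_diff_pair_ge hfinA i j
    omega

lemma VelCond.extend_graph (q : VelCond) (n i j : ℕ) (hi) (hj)
    (hij : i ≠ j) (hi') (hj') :
    (q.extend n i j hi hj hij hi' hj').graph = q.graph ∪ {(i, j), (j, i)} := rfl

/-- Proposition 5.3: for a `⊆*`-descending sequence `{p_ξ : ξ ∈ μ}` in `𝒫`
indexed by a countable ordinal `μ`, the poset `𝒫({p_ξ : ξ ∈ μ})` is countable and atomless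
(with respect to the ordering `q ≤ p ↔ q ⊇ p`). -/
theorem velCond_restricted_poset_countable_atomless (μ : Ordinal)
    (hμ : μ.card ≤ Cardinal.aleph0) (p : ∀ ξ : Ordinal, ξ < μ → VelCond)
    (hdesc : ∀ (ξ η : Ordinal) (hξη : ξ < η) (hη : η < μ),
      SupStar (p η hη) (p ξ (hξη.trans hη))) :
    {q : VelCond | ∃ (ξ : Ordinal) (hξ : ξ < μ), EqStar q (p ξ hξ)}.Countable ∧
    ∀ q ∈ {q : VelCond | ∃ (ξ : Ordinal) (hξ : ξ < μ), EqStar q (p ξ hξ)},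
      ∃ q₁ ∈ {q : VelCond | ∃ (ξ : Ordinal) (hξ : ξ < μ), EqStar q (p ξ hξ)},
        ∃ q₂ ∈ {q : VelCond | ∃ (ξ : Ordinal) (hξ : ξ < μ), EqStar q (p ξ hξ)},
          q.graph ⊆ q₁.graph ∧ q.graph ⊆ q₂.graph ∧
          ¬ ∃ r ∈ {q : VelCond | ∃ (ξ : Ordinal) (hξ : ξ < μ), EqStar q (p ξ hξ)},
              q₁.graph ⊆ r.graph ∧ q₂.graph ⊆ r.graph := by
  constructor
  · -- countability
    have hIio : (Set.Iio μ).Countable := by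
      rw [← Set.countable_coe_iff, ← Cardinal.mk_le_aleph0_iff, Ordinal.mk_Iio_ordinal]
      calc Cardinal.lift μ.card ≤ Cardinal.lift Cardinal.aleph0 := Cardinal.lift_le.mpr hμ
        _ = Cardinal.aleph0 := Cardinal.lift_aleph0
    haveI := hIio.to_subtype
    refine (Set.countable_iUnion
      (fun ξ : Set.Iio μ => countable_eqStar (p ξ.1 ξ.2))).mono ?_
    rintro q ⟨ξ, hξ, h⟩
    exact Set.mem_iUnion.2 ⟨⟨ξ, hξ⟩, h⟩
  · -- atomless
    rintro q ⟨ξ, hξ, hq⟩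
    obtain ⟨n, hn⟩ := (q.growth 3).nonempty
    simp only [Set.mem_setOf_eq] at hn
    set A := Set.Ico (2 ^ n) (2 ^ (n + 1)) \ (Prod.fst '' q.graph) with hA
    have hAfin : A.Finite := (Set.finite_Ico _ _).diff
    obtain ⟨i, hiA⟩ := Set.nonempty_of_ncard_ne_zero (s := A) (by omega)
    obtain ⟨j, hjA, hji⟩ := Set.exists_ne_of_one_lt_ncard (s := A) (by omega) i
    have h3 := ncard_diff_pair_ge hAfin i j
    obtain ⟨k, hkA⟩ := Set.nonempty_of_ncard_ne_zero (s := A \ {i, j}) (by omega)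
    have hki : k ≠ i := fun h => hkA.2 (Or.inl h)
    have hkj : k ≠ j := fun h => hkA.2 (Or.inr h)
    set q₁ := q.extend n i j hiA.1 hjA.1 hji.symm hiA.2 hjA.2 with hq₁
    set q₂ := q.extend n i k hiA.1 hkA.1.1 hki.symm hiA.2 hkA.1.2 with hq₂
    have hpair : ∀ a b : ℕ, ({(a, b), (b, a)} : Set (ℕ × ℕ)).Finite :=
      fun a b => (Set.finite_singleton _).insert _
    have hmemS : ∀ (a b : ℕ) (h1 h2 h3 h4 h5),
        EqStar (q.extend n a b h1 h2 h3 h4 h5) (p ξ hξ) := by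
      intro a b h1 h2 h3 h4 h5
      constructor
      · exact hq.1.subset fun x hx => ⟨hx.1, fun h => hx.2 (Or.inl h)⟩
      · refine (hq.2.union (hpair a b)).subset ?_
        rintro x ⟨hx1 | hx1, hx2⟩
        · exact Or.inl ⟨hx1, hx2⟩
        · exact Or.inr hx1
    refine ⟨q₁, ⟨ξ, hξ, hmemS _ _ _ _ _ _ _⟩, q₂, ⟨ξ, hξ, hmemS _ _ _ _ _ _ _⟩,
      Set.subset_union_left, Set.subset_union_left, ?_⟩
    rintro ⟨r, -, hr1, hr2⟩
    have hij : ((i, j) : ℕ × ℕ) ∈ q₁.graph := Or.inr (Or.inl rfl)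
    have hik : ((i, k) : ℕ × ℕ) ∈ q₂.graph := Or.inr (Or.inl rfl)
    exact hkj (r.func (hr1 hij) (hr2 hik)).symm
end
end

section
/- For every u ∈ ℕ*, the fiber 𝕀_u := π⁻¹({u}) is a nonempty compact connected subset of 𝕄* (a continuum). -/
open Set Topology Filter

noncomputable section

/-- The Stone extension `β𝕄 → βℕ` of the projection `ℕ × [0,1] → ℕ`. -/
def piFull : betaM → betaN :=
  stoneCechExtend (g := fun p : Mspace => (pure p.1 : betaN))
    (continuous_of_discreteTopology.comp continuous_fst)


lemma continuous_piFull : Continuous piFull := continuous_stoneCechExtend _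

lemma piFull_unit (p : Mspace) : piFull (stoneCechUnit p) = pure p.1 :=
  congrFun (stoneCechExtend_extends _) p

/-- The closure in `β𝕄` of the strip `A × [0,1]`. -/
def Kset (A : Set ℕ) : Set betaM :=
  closure (stoneCechUnit '' (A ×ˢ (univ : Set UnitI)))

lemma Kset_closed (A : Set ℕ) : IsClosed (Kset A) := isClosed_closure

lemma Kset_mono {A B : Set ℕ} (h : A ⊆ B) : Kset A ⊆ Kset B :=
  closure_mono (image_mono (prod_mono_left h))

lemma Kset_mem_piFull {A : Set ℕ} {x : betaM} (hx : x ∈ Kset A) : A ∈ piFull x := by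
  have hcl : IsClosed (piFull ⁻¹' {v : betaN | A ∈ v}) :=
    (ultrafilter_isClosed_basic A).preimage continuous_piFull
  have hsub : stoneCechUnit '' (A ×ˢ (univ : Set UnitI)) ⊆
      piFull ⁻¹' {v : betaN | A ∈ v} := by
    rintro _ ⟨p, ⟨hp, -⟩, rfl⟩
    simp only [mem_preimage, mem_setOf_eq, piFull_unit]
    exact hp
  exact closure_minimal hsub hcl hx

lemma mem_Kset_union (A : Set ℕ) (x : betaM) : x ∈ Kset A ∪ Kset Aᶜ := by
  have hcl : IsClosed (Kset A ∪ Kset Aᶜ) := (Kset_closed A).union (Kset_closed Aᶜ)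
  have hr : Set.range (stoneCechUnit : Mspace → betaM) ⊆ Kset A ∪ Kset Aᶜ := by
    rintro _ ⟨p, rfl⟩
    by_cases hp : p.1 ∈ A
    · exact Or.inl (subset_closure ⟨p, ⟨hp, trivial⟩, rfl⟩)
    · exact Or.inr (subset_closure ⟨p, ⟨hp, trivial⟩, rfl⟩)
  have hdense : closure (Set.range (stoneCechUnit : Mspace → betaM)) = univ :=
    denseRange_stoneCechUnit.closure_range
  have : (univ : Set betaM) ⊆ Kset A ∪ Kset Aᶜ := by
    rw [← hdense]; exact closure_minimal hr hcl
  exact this trivial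

lemma preimage_subset_Kset {u : betaN} {A : Set ℕ} (hA : A ∈ u) :
    piFull ⁻¹' {u} ⊆ Kset A := by
  intro x hx
  have hxu : piFull x = u := hx
  rcases mem_Kset_union A x with h | h
  · exact h
  · exact absurd (Kset_mem_piFull h) (by rw [hxu]; exact u.compl_notMem hA)

/-- The fiber over `u` is the intersection of all strip closures `Kset A`, `A ∈ u`. -/
lemma fiber_eq_iInter (u : betaN) :
    piFull ⁻¹' {u} = ⋂ i : {A : Set ℕ // A ∈ u}, Kset i.1 := by
  apply Subset.antisymm
  · exact subset_iInter fun i => preimage_subset_Kset i.2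
  · intro x hx
    have hle : (piFull x : Filter ℕ) ≤ (u : Filter ℕ) := fun A hA =>
      Kset_mem_piFull (mem_iInter.mp hx ⟨A, hA⟩)
    exact Ultrafilter.coe_le_coe.mp hle

/-- The sliceM `{n} × [0,1]` inside `β𝕄`. -/
def sliceM (n : ℕ) : Set betaM := Set.range (fun t : UnitI => stoneCechUnit (n, t))

lemma slice_isConnected (n : ℕ) : IsConnected (sliceM n) := by
  haveI : ConnectedSpace UnitI := Subtype.connectedSpace (isConnected_Icc zero_le_one)
  exact isConnected_range (continuous_stoneCechUnit.comp (Continuous.prodMk_right n))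

lemma slice_subset_Kset {n : ℕ} {A : Set ℕ} (hn : n ∈ A) : sliceM n ⊆ Kset A := by
  rintro _ ⟨t, rfl⟩
  exact subset_closure ⟨(n, t), ⟨hn, trivial⟩, rfl⟩

lemma Kset_subset_closure_of_slices {A : Set ℕ} {W : Set betaM}
    (h : ∀ n ∈ A, sliceM n ⊆ W) : Kset A ⊆ closure W := by
  apply closure_mono
  rintro _ ⟨p, ⟨hp, -⟩, rfl⟩
  exact h p.1 hp ⟨p.2, rfl⟩

/-- for every `u ∈ ℕ*` the fiber `𝕀_u = π⁻¹({u})` is a nonempty compact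
connected subset of `𝕄*` (a continuum). -/
theorem fiber_of_pi_is_continuum (u : betaN) (hu : u ∈ NstarS) :
    (MstarS ∩ piFull ⁻¹' {u}).Nonempty ∧ IsCompact (MstarS ∩ piFull ⁻¹' {u}) ∧
      IsConnected (MstarS ∩ piFull ⁻¹' {u}) := by
  classical
  -- the fiber lies inside 𝕄*
  have hfib_sub : piFull ⁻¹' {u} ⊆ MstarS := by
    rintro x hx ⟨p, rfl⟩
    have : piFull (stoneCechUnit p) = u := hx
    rw [piFull_unit] at this
    exact hu ⟨p.1, this⟩
  have hinter : MstarS ∩ piFull ⁻¹' {u} = piFull ⁻¹' {u} :=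
    inter_eq_self_of_subset_right hfib_sub
  rw [hinter]
  -- closedness and compactness of the fiber
  have hScl : IsClosed (piFull ⁻¹' {u}) := isClosed_singleton.preimage continuous_piFull
  have hScomp : IsCompact (piFull ⁻¹' {u}) := hScl.isCompact
  -- nonemptiness: piFull is surjective
  have hne : (piFull ⁻¹' {u}).Nonempty := by
    have hcl : IsClosed (Set.range piFull) := (isCompact_range continuous_piFull).isClosed
    have hsub : Set.range (pure : ℕ → betaN) ⊆ Set.range piFull := by
      rintro _ ⟨n, rfl⟩
      exact ⟨stoneCechUnit (n, ⟨0, le_refl 0, zero_le_one⟩), piFull_unit _⟩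
    have : u ∈ closure (Set.range (pure : ℕ → betaN)) := denseRange_pure u
    rcases closure_minimal hsub hcl this with ⟨x, hx⟩
    exact ⟨x, hx⟩
  refine ⟨hne, hScomp, hne, ?_⟩
  -- connectedness
  rw [isPreconnected_iff_subset_of_fully_disjoint_closed hScl]
  intro C D hC hD hSCD hCD
  by_contra hcon
  push_neg at hcon
  obtain ⟨hnC, hnD⟩ := hcon
  set S := piFull ⁻¹' {u} with hSdef
  -- both pieces are nonempty
  have hFne : (S ∩ C).Nonempty := by
    obtain ⟨x, hxS, hxD⟩ := not_subset.mp hnD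
    rcases hSCD hxS with h | h
    · exact ⟨x, hxS, h⟩
    · exact absurd h hxD
  have hGne : (S ∩ D).Nonempty := by
    obtain ⟨x, hxS, hxC⟩ := not_subset.mp hnC
    rcases hSCD hxS with h | h
    · exact absurd h hxC
    · exact ⟨x, hxS, h⟩
  -- separate the two compact pieces by open sets
  have hFcomp : IsCompact (S ∩ C) := hScomp.inter_right hC
  have hGcomp : IsCompact (S ∩ D) := hScomp.inter_right hD
  have hFG : Disjoint (S ∩ C) (S ∩ D) :=
    (hCD.mono inter_subset_right inter_subset_right)
  obtain ⟨U, V, hUo, hVo, hFU, hGV, hUV⟩ :=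
    SeparatedNhds.of_isCompact_isCompact hFcomp hGcomp hFG
  have hSUV : S ⊆ U ∪ V := by
    intro x hxS
    rcases hSCD hxS with h | h
    · exact Or.inl (hFU ⟨hxS, h⟩)
    · exact Or.inr (hGV ⟨hxS, h⟩)
  -- find a strip Kset B inside U ∪ V
  have hUVo : IsOpen (U ∪ V) := hUo.union hVo
  have hcompl : IsCompact ((U ∪ V)ᶜ) := hUVo.isClosed_compl.isCompact
  have hempty : ((U ∪ V)ᶜ ∩ ⋂ i : {A : Set ℕ // A ∈ u}, Kset i.1) = ∅ := by
    rw [← fiber_eq_iInter u]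
    rw [eq_empty_iff_forall_notMem]
    rintro x ⟨hxc, hxS⟩
    exact hxc (hSUV hxS)
  obtain ⟨Fs, hFs⟩ :=
    hcompl.elim_finite_subfamily_closed (fun i : {A : Set ℕ // A ∈ u} => Kset i.1)
      (fun i => Kset_closed i.1) hempty
  set B : Set ℕ := ⋂ i ∈ Fs, (i : {A : Set ℕ // A ∈ u}).1 with hBdef
  have hBu : B ∈ u := by
    rw [hBdef]
    exact (Filter.biInter_finset_mem Fs).mpr fun i _ => i.2
  have hKB : Kset B ⊆ U ∪ V := by
    intro x hx
    by_contra hxUV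
    have hxall : x ∈ ⋂ i ∈ Fs, Kset (i : {A : Set ℕ // A ∈ u}).1 := by
      refine mem_iInter₂.mpr fun i hi => ?_
      exact Kset_mono (biInter_subset_of_mem hi) hx
    exact (eq_empty_iff_forall_notMem.mp hFs x) ⟨hxUV, hxall⟩
  -- each sliceM over n ∈ B goes entirely into U or into V
  set BU : Set ℕ := {n ∈ B | sliceM n ⊆ U} with hBUdef
  set BV : Set ℕ := {n ∈ B | sliceM n ⊆ V} with hBVdef
  have hBsub : B ⊆ BU ∪ BV := by
    intro n hn
    have hslice : sliceM n ⊆ U ∪ V := (slice_subset_Kset hn).trans hKB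
    rcases (slice_isConnected n).isPreconnected.subset_or_subset hUo hVo hUV hslice with h | h
    · exact Or.inl ⟨hn, h⟩
    · exact Or.inr ⟨hn, h⟩
  have hmem : BU ∪ BV ∈ u := u.toFilter.mem_of_superset hBu hBsub
  -- symmetric contradiction
  have key : ∀ W W' : Set betaM, IsOpen W' → Disjoint W W' →
      {n : ℕ | n ∈ B ∧ sliceM n ⊆ W} ∈ u → (S ∩ W').Nonempty → False := by
    rintro W W' hW'o hWW' hWu ⟨g, hgS, hgW'⟩
    have hgK : g ∈ Kset {n : ℕ | n ∈ B ∧ sliceM n ⊆ W} := preimage_subset_Kset hWu hgS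
    have hgcl : g ∈ closure W :=
      Kset_subset_closure_of_slices (fun n hn => hn.2) hgK
    rcases mem_closure_iff.mp hgcl W' hW'o hgW' with ⟨y, hyW', hyW⟩
    exact hWW'.ne_of_mem hyW hyW' rfl
  rcases (Ultrafilter.union_mem_iff.mp hmem) with h | h
  · exact key U V hVo hUV h ⟨hGne.choose, hGne.choose_spec.1, hGV hGne.choose_spec⟩
  · exact key V U hUo hUV.symm h ⟨hFne.choose, hFne.choose_spec.1, hFU hFne.choose_spec⟩
end
end

section
/- Fix an enumeration (q_ℓ)_{ℓ ∈ ω} of the rationals in [0,1]. For f ∈ ω^ℕ let D_f = {(n, q_ℓ) : n ∈ ℕ, ℓ < f(n)} ⊆ 𝕄. Then the union ⋃{(D_f)* : f ∈ ω^ℕ} is a dense subset of 𝕄*. -/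
open Set Topology Filter

noncomputable section

/-! A set `A ⊆ 𝕄` has nonempty `A*` exactly when it meets infinitely many columns
`{n} × [0,1]`: if it meets finitely many, `cl A` is compact and its image in `β𝕄` is closed;
conversely, if `cl_{β𝕄} A ⊆ 𝕄` then `cl A` is compact because `𝕄` embeds in `β𝕄`.
Given `x ∈ 𝕄*` and a closed neighbourhood `N` of `x`, the trace `V` of `int N` on `𝕄` is open
with `x ∈ V*`, so `V` meets infinitely many columns, each of them, by density, at a rational
point `(n, q_{ℓ(n)})`. For `f = ℓ + 1` the set `D_f ∩ V` meets the same columns, so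
`(D_f ∩ V)*` is a nonempty subset of `N ∩ (D_f)*`. -/

theorem closure_image_stoneCechUnit_subset_range_iff {X : Type*} [TopologicalSpace X]
    [CompletelyRegularSpace X] {A : Set X} :
    closure (stoneCechUnit '' A) ⊆ range stoneCechUnit ↔ IsCompact (closure A) := by
  refine ⟨fun h => ?_, fun h => ?_⟩
  · rw [isInducing_stoneCechUnit.closure_eq_preimage_closure_image]
    exact isInducing_stoneCechUnit.isCompact_preimage' isClosed_closure.isCompact h
  · exact (closure_minimal (image_mono subset_closure)
      (h.image continuous_stoneCechUnit).isClosed).trans (image_subset_range _ _)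

theorem isCompact_closure_iff_finite_image_fst {X Y : Type*} [TopologicalSpace X]
    [DiscreteTopology X] [TopologicalSpace Y] [CompactSpace Y] {A : Set (X × Y)} :
    IsCompact (closure A) ↔ (Prod.fst '' A).Finite := by
  refine ⟨fun h => ?_, fun h => ?_⟩
  · exact (h.image continuous_fst).finite_of_discrete.subset (image_mono subset_closure)
  · have hsub : closure A ⊆ (Prod.fst '' A) ×ˢ univ :=
      closure_minimal (fun p hp => ⟨mem_image_of_mem _ hp, trivial⟩)
        ((isClosed_discrete _).prod isClosed_univ)
    exact (h.isCompact.prod isCompact_univ).of_isClosed_subset isClosed_closure hsub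

theorem mstar_nonempty_iff {A : Set Mspace} :
    (mstar A).Nonempty ↔ (Prod.fst '' A).Infinite := by
  rw [mstar, sdiff_nonempty, Mcopy, closure_image_stoneCechUnit_subset_range_iff,
    isCompact_closure_iff_finite_image_fst]
  rfl

theorem mstar_mono {A B : Set Mspace} (h : A ⊆ B) : mstar A ⊆ mstar B :=
  sdiff_subset_sdiff_left (closure_mono (image_mono h))

theorem dense_rat_unitI : Dense {x : UnitI | ∃ r : ℚ, (r : ℝ) = x} := by
  refine dense_iff_exists_between.2 fun a b hab => ?_
  obtain ⟨r, har, hrb⟩ := exists_rat_btwn (Subtype.coe_lt_coe.2 hab)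
  exact ⟨⟨r, a.2.1.trans har.le, hrb.le.trans b.2.2⟩, ⟨r, rfl⟩, har, hrb⟩

theorem union_of_Df_star_dense_general (q : ℕ → UnitI)
    (hran : Set.range q = {x : UnitI | ∃ r : ℚ, ((r : ℝ)) = (x : ℝ)}) :
    MstarS ⊆ closure (⋃ f : ℕ → ℕ, mstar {p : Mspace | ∃ ℓ : ℕ, ℓ < f p.1 ∧ p.2 = q ℓ}) := by
  intro x hx
  refine mem_closure_iff.2 fun U hU hxU => ?_
  obtain ⟨N, hN, hNclosed, hNU⟩ := exists_mem_nhds_isClosed_subset (hU.mem_nhds hxU)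
  set V : Set Mspace := stoneCechUnit ⁻¹' interior N
  have hV : IsOpen V := isOpen_interior.preimage continuous_stoneCechUnit
  have hxV : x ∈ mstar V := by
    refine ⟨?_, hx⟩
    rw [image_preimage_eq_inter_range]
    exact isOpen_interior.inter_closure
      ⟨mem_interior_iff_mem_nhds.2 hN, denseRange_stoneCechUnit x⟩
  have hrat : ∀ n ∈ Prod.fst '' V, ∃ k, (n, q k) ∈ V := by
    rintro n ⟨⟨n, t⟩, hp, rfl⟩
    obtain ⟨_, ⟨k, rfl⟩, hk⟩ := (hran ▸ dense_rat_unitI).exists_mem_open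
      (hV.preimage (Continuous.prodMk_right n)) ⟨t, hp⟩
    exact ⟨k, hk⟩
  choose! ℓ hℓ using hrat
  set D : Set Mspace := {p | ∃ k, k < ℓ p.1 + 1 ∧ p.2 = q k}
  have hDV : Prod.fst '' V ⊆ Prod.fst '' (D ∩ V) := fun n hn =>
    ⟨(n, q (ℓ n)), ⟨⟨ℓ n, Nat.lt_succ_self _, rfl⟩, hℓ n hn⟩, rfl⟩
  obtain ⟨y, hy_cl, hy⟩ := mstar_nonempty_iff.2 ((mstar_nonempty_iff.1 ⟨x, hxV⟩).mono hDV)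
  refine ⟨y, hNU ?_, mem_iUnion.2 ⟨fun n => ℓ n + 1, mstar_mono inter_subset_left ⟨hy_cl, hy⟩⟩⟩
  refine closure_minimal ?_ hNclosed hy_cl
  rintro _ ⟨p, ⟨-, hp⟩, rfl⟩
  exact interior_subset hp

/-- for an enumeration `(q_ℓ)` of the rationals in `[0,1]` and
`D_f = {(n,q_ℓ) : ℓ < f(n)}`, the union `⋃_f (D_f)*` is dense in `𝕄*`. -/
theorem union_of_Df_star_dense (q : ℕ → UnitI) (hinj : Function.Injective q)
    (hran : Set.range q = {x : UnitI | ∃ r : ℚ, ((r : ℝ)) = (x : ℝ)}) :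
    MstarS ⊆ closure (⋃ f : ℕ → ℕ, mstar {p : Mspace | ∃ ℓ : ℕ, ℓ < f p.1 ∧ p.2 = q ℓ}) :=
  union_of_Df_star_dense_general q hran
end
end

section
/- For every closed subset D of 𝕄, the set D* is a P_𝔟-set in 𝕄*: for every family of fewer than 𝔟 open subsets of 𝕄* each containing D*, D* is contained in the interior of the intersection of the family. -/
open Set Topology Filter

noncomputable section

/-- The bounding number `𝔟`: the least cardinality of a `≤*`-unbounded family in `ℕ^ℕ`. -/
def frakb : Cardinal :=
  sInf {c : Cardinal |
    ∃ F : Set (ℕ → ℕ), Cardinal.mk F = c ∧ ¬ ∃ g : ℕ → ℕ, ∀ f ∈ F, EvDomLE f g}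

/-- `K` is a `P_κ`-set in `X`: for every family of fewer than `κ` open sets each
containing `K`, `K` is contained in the interior of the intersection of the family. -/
def IsPSet (κ : Cardinal) {X : Type} [TopologicalSpace X] (K : Set X) : Prop :=
  ∀ (ι : Type) (U : ι → Set X), Cardinal.mk ι < κ → (∀ i, IsOpen (U i)) → (∀ i, K ⊆ U i) →
    K ⊆ interior (⋂ i, U i)

/-!
Let `U i`, `i ∈ ι`, be open neighbourhoods of `D*` in `𝕄*`, with `#ι < 𝔟`. By normality of `β𝕄`
each `U i` yields an open `V i ⊇ cl D` in `β𝕄` with `cl (V i) ∩ 𝕄* ⊆ U i`. On the compact column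
`{n} × [0,1]` the trace of `V i` on `𝕄` contains a `1/(f i n + 1)`-thickening of the trace of `D`.
Since `#ι < 𝔟`, a single `g` eventually dominates every `f i`; the union `W` of the
`1/(g n + 1)`-thickenings of the traces of `D` is an open neighbourhood of `D`, and it lies in
`V i` up to finitely many columns, that is, up to a compact set, which `𝕄*` does not see.
Hence `β𝕄 ∖ cl (𝕄 ∖ W)` is an open neighbourhood of `cl D` whose trace on `𝕄*` lies in every `U i`.
-/

section StoneCech

variable {X : Type*} [TopologicalSpace X]

theorem disjoint_closure_image_stoneCechUnit_s17 [NormalSpace X] {A B : Set X} (hA : IsClosed A)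
    (hB : IsClosed B) (hAB : Disjoint A B) :
    Disjoint (closure (stoneCechUnit '' A)) (closure (stoneCechUnit '' B)) := by
  obtain ⟨f, hf0, hf1, hf01⟩ := exists_continuous_zero_one_of_isClosed hA hB hAB
  let φ : X → Icc (0 : ℝ) 1 := fun x => ⟨f x, hf01 x⟩
  have hφ : Continuous φ := (map_continuous f).subtype_mk _
  have hclosure : ∀ {S : Set X} {c : Icc (0 : ℝ) 1}, (∀ x ∈ S, φ x = c) →
      closure (stoneCechUnit '' S) ⊆ stoneCechExtend hφ ⁻¹' {c} := fun hc =>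
    closure_minimal (by rintro _ ⟨x, hx, rfl⟩; simp [hc x hx])
      (isClosed_singleton.preimage (continuous_stoneCechExtend hφ))
  refine Disjoint.mono (hclosure (c := ⟨0, by norm_num⟩) fun x hx => Subtype.ext (hf0 hx))
    (hclosure (c := ⟨1, by norm_num⟩) fun x hx => Subtype.ext (hf1 hx)) ?_
  exact (disjoint_singleton.mpr fun h => by simpa using congrArg Subtype.val h).preimage _

theorem IsClopen.isOpen_closure_image_stoneCechUnit {K : Set X} (hK : IsClopen K) :
    IsOpen (closure (stoneCechUnit '' K)) := by
  have hχ : Continuous K.boolIndicator := (continuous_boolIndicator_iff_isClopen K).mpr hK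
  set F := stoneCechExtend hχ
  have hF : IsClopen (F ⁻¹' {true}) := (isClopen_discrete _).preimage (continuous_stoneCechExtend hχ)
  suffices closure (stoneCechUnit '' K) = F ⁻¹' {true} by rw [this]; exact hF.isOpen
  refine subset_antisymm (closure_minimal ?_ hF.isClosed) fun z hz => ?_
  · rintro _ ⟨x, hx, rfl⟩
    simpa [F, Set.boolIndicator] using hx
  · refine closure_mono ?_ (denseRange_stoneCechUnit.open_subset_closure_inter hF.isOpen hz)
    rintro _ ⟨hx, x, rfl⟩
    exact ⟨x, by simpa [F, Set.boolIndicator] using hx, rfl⟩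

theorem closure_image_stoneCechUnit_diff_range_subset {K : Set X} (hK : IsCompact K) (s : Set X) :
    closure (stoneCechUnit '' s) \ range stoneCechUnit ⊆ closure (stoneCechUnit '' (s \ K)) := by
  rintro z ⟨hz, hzr⟩
  have hsplit : closure (stoneCechUnit '' s) ⊆
      closure (stoneCechUnit '' (s \ K)) ∪ stoneCechUnit '' K :=
    calc closure (stoneCechUnit '' s)
        ⊆ closure (stoneCechUnit '' (s \ K) ∪ stoneCechUnit '' K) := by
          rw [← image_union, sdiff_union_self]; gcongr; exact subset_union_left
      _ = _ := by
          rw [closure_union, (hK.image continuous_stoneCechUnit).isClosed.closure_eq]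
  rcases hsplit hz with h | ⟨x, -, rfl⟩
  · exact h
  · exact absurd (mem_range_self x) hzr

end StoneCech

theorem DenseRange.compl_closure_image_compl_subset {α X : Type*} [TopologicalSpace X]
    {f : α → X} (hf : DenseRange f) (s : Set α) : (closure (f '' sᶜ))ᶜ ⊆ closure (f '' s) := by
  intro z hz
  have hz' : z ∈ closure (range f) := hf.closure_range ▸ mem_univ z
  rw [← image_univ, ← union_compl_self s, image_union, closure_union] at hz'
  exact hz'.resolve_right hz

theorem exists_isOpen_superset_closure_inter_subset {Y : Type*} [TopologicalSpace Y]
    [NormalSpace Y] {A S t : Set Y} (hA : IsClosed A) (hS : IsClosed S) (ht : IsOpen t)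
    (hASt : A ∩ S ⊆ t) : ∃ V, IsOpen V ∧ A ⊆ V ∧ closure V ∩ S ⊆ t := by
  obtain ⟨V, hV, hAV, hVt⟩ := normal_exists_closure_subset hA (hS.isOpen_compl.union ht)
    fun x hx => (em (x ∈ S)).elim (fun hxS => Or.inr (hASt ⟨hx, hxS⟩)) Or.inl
  exact ⟨V, hV, hAV, fun x ⟨hxV, hxS⟩ => (hVt hxV).resolve_left (not_not_intro hxS)⟩

theorem exists_evDomLE_of_mk_lt_frakb {ι : Type} (F : ι → ℕ → ℕ) (hι : Cardinal.mk ι < frakb) :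
    ∃ g, ∀ i, EvDomLE (F i) g := by
  by_contra h
  have hb : frakb ≤ Cardinal.mk (range F) :=
    csInf_le' ⟨range F, rfl, fun ⟨g, hg⟩ => h ⟨g, fun i => hg _ ⟨i, rfl⟩⟩⟩
  exact (hb.trans Cardinal.mk_range_le).not_gt hι

namespace Mspace

def column (n : ℕ) : Set Mspace := Prod.fst ⁻¹' {n}

theorem isClopen_column (n : ℕ) : IsClopen (column n) :=
  (isClopen_discrete {n}).preimage continuous_fst

theorem isCompact_column (n : ℕ) : IsCompact (column n) := by
  rw [column, ← prod_univ]
  exact isCompact_singleton.prod isCompact_univ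

end Mspace

open Mspace Metric

theorem isOpen_Mcopy : IsOpen Mcopy := by
  have hM : Mcopy = ⋃ n, stoneCechUnit '' column n := by
    rw [← image_iUnion, Mcopy, ← image_univ]
    congr 1
    exact (iUnion_eq_univ_iff.mpr fun p => ⟨p.1, rfl⟩).symm
  rw [hM]
  refine isOpen_iUnion fun n => ?_
  rw [← ((isCompact_column n).image continuous_stoneCechUnit).isClosed.closure_eq]
  exact (isClopen_column n).isOpen_closure_image_stoneCechUnit

theorem isClosed_MstarS : IsClosed MstarS :=
  isOpen_Mcopy.isClosed_compl

theorem exists_thickening_column_subset {D O : Set Mspace} (hD : IsClosed D) (hO : IsOpen O)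
    (hDO : D ⊆ O) (n : ℕ) : ∃ k : ℕ, thickening (1 / (k + 1)) (D ∩ column n) ⊆ O := by
  obtain ⟨δ, hδ, hδO⟩ := ((isCompact_column n).inter_left hD).exists_thickening_subset_open hO
    (inter_subset_left.trans hDO)
  obtain ⟨k, hk⟩ := exists_nat_one_div_lt hδ
  exact ⟨k, (thickening_mono hk.le _).trans hδO⟩

def columnNbhd (D : Set Mspace) (g : ℕ → ℕ) : Set Mspace :=
  ⋃ n, column n ∩ thickening (1 / (g n + 1)) (D ∩ column n)

theorem isOpen_columnNbhd (D : Set Mspace) (g : ℕ → ℕ) : IsOpen (columnNbhd D g) :=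
  isOpen_iUnion fun n => (isClopen_column n).isOpen.inter isOpen_thickening

theorem subset_columnNbhd (D : Set Mspace) (g : ℕ → ℕ) : D ⊆ columnNbhd D g := fun p hp =>
  mem_iUnion.mpr ⟨p.1, rfl, self_subset_thickening (by positivity) _ ⟨hp, rfl⟩⟩

theorem exists_isCompact_columnNbhd_diff_subset {D O : Set Mspace} {f g : ℕ → ℕ}
    (hfg : EvDomLE f g) (hf : ∀ n, thickening (1 / (f n + 1)) (D ∩ column n) ⊆ O) :
    ∃ K, IsCompact K ∧ columnNbhd D g \ K ⊆ O := by
  refine ⟨⋃ n ∈ {n | ¬ f n ≤ g n}, column n,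
    (eventually_cofinite.mp hfg).isCompact_biUnion fun n _ => isCompact_column n, ?_⟩
  rintro p ⟨hp, hpK⟩
  obtain ⟨n, hpn, hpD⟩ := mem_iUnion.mp hp
  have hn : f n ≤ g n := by
    by_contra h
    exact hpK (mem_biUnion h hpn)
  exact hf n (thickening_mono (by gcongr) _ hpD)

/-- for every closed `D ⊆ 𝕄`, the set `D*` is a `P_𝔟`-set in `𝕄*`. -/
theorem closed_set_star_is_Pb_set (D : Set Mspace) (hD : IsClosed D) :
    IsPSet frakb {p : ↥MstarS | (p : betaM) ∈ mstar D} := by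
  intro ι U hcard hUopen hUK
  choose t ht hUt using fun i => isOpen_induced_iff.mp (hUopen i)
  have hDt : ∀ i, closure (stoneCechUnit '' D) ∩ MstarS ⊆ t i := fun i x ⟨hxD, hxM⟩ => by
    simpa [← hUt i] using hUK i (show (⟨x, hxM⟩ : MstarS) ∈ _ from ⟨hxD, hxM⟩)
  choose V hV hDV hVt using fun i =>
    exists_isOpen_superset_closure_inter_subset isClosed_closure isClosed_MstarS (ht i) (hDt i)
  choose f hf using fun i => exists_thickening_column_subset hD
    ((hV i).preimage continuous_stoneCechUnit) fun p hp => hDV i (subset_closure ⟨p, hp, rfl⟩)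
  obtain ⟨g, hg⟩ := exists_evDomLE_of_mk_lt_frakb f hcard
  set W := columnNbhd D g
  set Ω := (closure (stoneCechUnit '' Wᶜ))ᶜ
  have hDΩ : closure (stoneCechUnit '' D) ⊆ Ω :=
    (disjoint_closure_image_stoneCechUnit_s17 hD (isOpen_columnNbhd D g).isClosed_compl
      (disjoint_compl_right.mono_left (subset_columnNbhd D g))).subset_compl_right
  have hΩt : ∀ i, Ω ∩ MstarS ⊆ t i := by
    rintro i x ⟨hxΩ, hxM⟩
    obtain ⟨K, hK, hWK⟩ := exists_isCompact_columnNbhd_diff_subset (hg i) (hf i)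
    have hxW := closure_image_stoneCechUnit_diff_range_subset hK W
      ⟨denseRange_stoneCechUnit.compl_closure_image_compl_subset W hxΩ, hxM⟩
    exact hVt i ⟨closure_mono ((image_mono hWK).trans (image_preimage_subset _ _)) hxW, hxM⟩
  refine fun p hp => interior_maximal (fun q hq => mem_iInter.mpr fun i => ?_)
    (isClosed_closure.isOpen_compl.preimage continuous_subtype_val) (hDΩ hp.1)
  simpa [← hUt i] using hΩt i ⟨hq, q.2⟩
end
end

section
/- The partial order (𝒫, ⊇*) is σ-directed closed: for every countable subset D ⊆ 𝒫 that is directed under ⊇* (any two elements of D have a common mod-finite extension in D), there is p ∈ 𝒫 with p ⊇* q for every q ∈ D. -/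
open Set Topology Filter

noncomputable section

/-!
Enumerate `D` and use directedness to get a `⊇*`-decreasing sequence `r₀ ≥ r₁ ≥ ⋯` below all
of `D`. Choose block indices `m₀ < m₁ < ⋯` such that block `m_j` has at least `j` points outside
`dom r_j` and every pair of `r_i` (`i ≤ j`) missing from `r_j` lies below block `m_j`. The lower
bound copies `r_j` on the blocks from `m_j` up to `m_{j+1}`: as conditions respect blocks this is
again a condition, the free points of block `m_j` give the growth condition, and `r_i` differs
from it only below block `m_i`.
-/

/-- As in forcing, `p ≤ q` means that `p` is the stronger condition: `p ⊇* q`. -/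
instance : Preorder VelCond where
  le := SupStar
  le_refl p := by simp [SupStar]
  le_trans p q r hpq hqr := (hqr.union hpq).subset fun x ⟨hxr, hxp⟩ => by
    by_cases hxq : x ∈ q.graph
    · exact Or.inr ⟨hxq, hxp⟩
    · exact Or.inl ⟨hxr, hxq⟩

lemma exists_strictMono_forall_mem {S : ℕ → Set ℕ} (hS : ∀ j, (S j).Infinite) :
    ∃ m : ℕ → ℕ, StrictMono m ∧ ∀ j, m j ∈ S j := by
  choose next hnext_mem hnext_gt using fun j n => (hS j).exists_gt n
  let m : ℕ → ℕ := fun j => Nat.rec (next 0 0) (fun j mj => next (j + 1) mj) j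
  refine ⟨m, strictMono_nat_of_lt_succ fun j => hnext_gt _ _, fun j => ?_⟩
  cases j <;> exact hnext_mem _ _

/-- The last index `j` with `m j ≤ n` (or `0` if there is none). -/
def indexBelow (m : ℕ → ℕ) (n : ℕ) : ℕ := Nat.findGreatest (fun j => m j ≤ n) n

section indexBelow

variable {m : ℕ → ℕ} {i n : ℕ}

lemma le_indexBelow (hm : StrictMono m) (h : m i ≤ n) : i ≤ indexBelow m n :=
  Nat.le_findGreatest (hm.le_apply.trans h) h

lemma apply_indexBelow_le (h : m 0 ≤ n) : m (indexBelow m n) ≤ n :=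
  Nat.findGreatest_spec (P := fun j => m j ≤ n) (Nat.zero_le n) h

lemma indexBelow_apply (hm : StrictMono m) (j : ℕ) : indexBelow m (m j) = j :=
  le_antisymm (hm.le_iff_le.1 (apply_indexBelow_le (hm.monotone j.zero_le)))
    (le_indexBelow hm le_rfl)

end indexBelow

namespace VelCond

def freeCount (q : VelCond) (n : ℕ) : ℕ :=
  (Set.Ico (2 ^ n) (2 ^ (n + 1)) \ Prod.fst '' q.graph).ncard

lemma log_eq_iff_mem_Ico {a n : ℕ} (ha : 0 < a) :
    Nat.log 2 a = n ↔ a ∈ Set.Ico (2 ^ n) (2 ^ (n + 1)) :=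
  Nat.log_eq_iff (Or.inr ⟨one_lt_two, ha.ne'⟩)

variable {q : VelCond} {a b : ℕ}

lemma fst_pos (h : (a, b) ∈ q.graph) : 0 < a := by
  by_contra! ha
  have hb : 0 < b := Nat.pos_of_ne_zero fun hb => (q.invol h).2 (by omega)
  have hab := ((q.blocks h _).2 ((log_eq_iff_mem_Ico hb).1 rfl)).1
  have := Nat.two_pow_pos (Nat.log 2 b)
  omega

lemma log_snd_eq (h : (a, b) ∈ q.graph) : Nat.log 2 b = Nat.log 2 a :=
  (log_eq_iff_mem_Ico (fst_pos (q.invol h).1)).2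
    ((q.blocks h _).1 ((log_eq_iff_mem_Ico (fst_pos h)).1 rfl))

lemma injOn_fst (q : VelCond) : Set.InjOn Prod.fst q.graph := by
  rintro ⟨a, b⟩ hb ⟨a', b'⟩ hb' (rfl : a = a')
  rw [q.func hb hb']

lemma finite_setOf_log_fst_lt (q : VelCond) (n : ℕ) :
    {x ∈ q.graph | Nat.log 2 x.1 < n}.Finite :=
  Set.Finite.of_finite_image ((Set.finite_Iio (2 ^ n)).subset <| by
    rintro _ ⟨x, ⟨-, hx⟩, rfl⟩
    exact Nat.lt_pow_of_log_lt one_lt_two hx) (q.injOn_fst.mono fun _ hx => hx.1)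

def empty : VelCond where
  graph := ∅
  func := by simp
  dom_eq_ran := by simp
  blocks := by simp
  invol := by simp
  growth k := (Set.Ici_infinite k).mono fun n (hn : k ≤ n) => by
    have := Nat.lt_two_pow_self (n := n)
    change k ≤ Set.ncard _
    simp only [Set.image_empty, Set.sdiff_empty, Set.ncard_Ico_nat, pow_succ]
    omega

section glue

variable (c : ℕ → VelCond)

def glueGraph : Set (ℕ × ℕ) := {x | x ∈ (c (Nat.log 2 x.1)).graph}

variable {c}

lemma swap_mem_glueGraph {i j : ℕ} (h : (i, j) ∈ glueGraph c) : (j, i) ∈ glueGraph c := by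
  change (j, i) ∈ (c (Nat.log 2 j)).graph
  rw [log_snd_eq h]
  exact ((c _).invol h).1

lemma Ico_diff_image_fst_glueGraph (n : ℕ) :
    Set.Ico (2 ^ n) (2 ^ (n + 1)) \ Prod.fst '' glueGraph c =
      Set.Ico (2 ^ n) (2 ^ (n + 1)) \ Prod.fst '' (c n).graph := by
  ext a
  refine and_congr_right fun ha => not_congr ?_
  have hlog : Nat.log 2 a = n := (log_eq_iff_mem_Ico (ha.1.trans_lt' (Nat.two_pow_pos n))).2 ha
  constructor
  · rintro ⟨x, hx, rfl⟩
    exact ⟨x, hlog ▸ hx, rfl⟩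
  · rintro ⟨x, hx, rfl⟩
    exact ⟨x, show x ∈ (c (Nat.log 2 x.1)).graph from hlog ▸ hx, rfl⟩

def glue (hc : ∀ k, {n | k ≤ (c n).freeCount n}.Infinite) : VelCond where
  graph := glueGraph c
  func _ _ _ hj hk := (c _).func hj hk
  dom_eq_ran := by
    ext a
    constructor
    · rintro ⟨⟨i, j⟩, h, rfl⟩
      exact ⟨(j, i), swap_mem_glueGraph h, rfl⟩
    · rintro ⟨⟨i, j⟩, h, rfl⟩
      exact ⟨(j, i), swap_mem_glueGraph h, rfl⟩
  blocks _ _ h := (c _).blocks h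
  invol _ _ h := ⟨swap_mem_glueGraph h, ((c _).invol h).2⟩
  growth k := by
    simp only [Ico_diff_image_fst_glueGraph]
    exact hc k

end glue

section antitone

variable {r : ℕ → VelCond} {m : ℕ → ℕ}

lemma growth_glue_indexBelow (hm : StrictMono m) (hfree : ∀ j, j ≤ (r j).freeCount (m j))
    (k : ℕ) : {n | k ≤ (r (indexBelow m n)).freeCount n}.Infinite :=
  ((Set.Ici_infinite k).image hm.injective.injOn).mono <| by
    rintro _ ⟨j, hj, rfl⟩
    change k ≤ (r (indexBelow m (m j))).freeCount (m j)
    rw [indexBelow_apply hm]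
    exact le_trans hj (hfree j)

lemma glue_indexBelow_le (hm : StrictMono m) (hfree : ∀ j, j ≤ (r j).freeCount (m j))
    (htail : ∀ i j, i ≤ j → ∀ x ∈ (r i).graph \ (r j).graph, Nat.log 2 x.1 < m j) (i : ℕ) :
    glue (growth_glue_indexBelow hm hfree) ≤ r i := by
  refine ((r i).finite_setOf_log_fst_lt (m i)).subset fun x ⟨hx, hx_glue⟩ => ⟨hx, ?_⟩
  by_contra! hle
  set j := indexBelow m (Nat.log 2 x.1)
  have hij : i ≤ j := le_indexBelow hm hle
  have hj : m j ≤ Nat.log 2 x.1 := apply_indexBelow_le ((hm.monotone i.zero_le).trans hle)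
  exact (htail i j hij x ⟨hx, hx_glue⟩).not_ge hj

lemma exists_blockIndices (hr : Antitone r) :
    ∃ m : ℕ → ℕ, StrictMono m ∧ (∀ j, j ≤ (r j).freeCount (m j)) ∧
      ∀ i j, i ≤ j → ∀ x ∈ (r i).graph \ (r j).graph, Nat.log 2 x.1 < m j := by
  have htail_finite (j : ℕ) :
      ((fun x : ℕ × ℕ => Nat.log 2 x.1) '' ⋃ i ∈ Set.Iic j, (r i).graph \ (r j).graph).Finite :=
    ((Set.finite_Iic j).biUnion fun i hij => hr hij).image _
  choose B hB using fun j => (htail_finite j).bddAbove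
  obtain ⟨m, hm, hmS⟩ := exists_strictMono_forall_mem
    (S := fun j => {n | j ≤ (r j).freeCount n} \ Set.Iic (B j))
    fun j => ((r j).growth j).sdiff (Set.finite_Iic _)
  refine ⟨m, hm, fun j => (hmS j).1, fun i j hij x hx => ?_⟩
  have hxB : Nat.log 2 x.1 ≤ B j := hB j ⟨x, Set.mem_biUnion (Set.mem_Iic.2 hij) hx, rfl⟩
  exact hxB.trans_lt (not_le.1 (hmS j).2)

theorem exists_le_of_antitone (hr : Antitone r) : ∃ p : VelCond, ∀ n, p ≤ r n :=
  let ⟨_, hm, hfree, htail⟩ := exists_blockIndices hr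
  ⟨_, glue_indexBelow_le hm hfree htail⟩

end antitone

end VelCond

/-- the partial order `(𝒫, ⊇*)` is σ-directed closed. -/
theorem velCond_sigma_directed_closed (D : Set VelCond) (hD : D.Countable)
    (hdir : ∀ q₁ ∈ D, ∀ q₂ ∈ D, ∃ r ∈ D, SupStar r q₁ ∧ SupStar r q₂) :
    ∃ p : VelCond, ∀ q ∈ D, SupStar p q := by
  rcases D.eq_empty_or_nonempty with rfl | hne
  · exact ⟨VelCond.empty, by simp⟩
  obtain ⟨f, rfl⟩ := hD.exists_eq_range hne
  have hf : Directed (· ≥ ·) f := directedOn_range.1 hdir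
  obtain ⟨p, hp⟩ := VelCond.exists_le_of_antitone hf.sequence_anti
  exact ⟨p, Set.forall_mem_range.2 fun n => (hp _).trans (hf.sequence_le n)⟩
end
end
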